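/- arXiv:2011.09163 — 12 statements merged into one kernel-verified Lean document; each statement's English description precedes it below -/
import Mathlib

section
/- The canonical ring homomorphism φ : A → Â is injective if and only if for every index j the restriction of φ to 𝔞_j, viewed as a map 𝔞_j → 𝔞̂_j, is injective; and φ is surjective if and only if for every index j the map 𝔞_j → 𝔞̂_j is surjective, i.e. every element of 𝔞̂_j is the image under φ of an element of 𝔞_j. -/
/-!
The canonical map `φ : A → Â` is additive, its kernel `⋂ i, 𝔞 i` lies in every `𝔞 j`, and
`𝔞 j` is exactly the preimage of `𝔞̂ j`. Injectivity of an additive map can be tested on any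
subgroup containing its kernel. For surjectivity, since `A → A ⧸ 𝔞 j` is onto, every `x ∈ Â`
agrees with some `φ b` in the `j`-th coordinate, so `x - φ b ∈ 𝔞̂ j`; hence hitting `𝔞̂ j`
from `𝔞 j` is as good as hitting all of `Â`.
-/

open Function

section AddGroupHom

variable {G H Q F : Type*} [AddGroup G] [AddGroup H] [AddGroup Q]
  [FunLike F G H] [AddMonoidHomClass F G H]

theorem injective_iff_injOn_of_map_eq_zero_imp_mem (f : F) {S : Set G} (hS₀ : 0 ∈ S)
    (hS : ∀ a, f a = 0 → a ∈ S) : Injective f ↔ Set.InjOn f S := by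
  refine ⟨fun hf => hf.injOn, fun hf => (injective_iff_map_eq_zero f).2 fun a ha => ?_⟩
  exact hf (hS a ha) hS₀ (by rw [ha, map_zero])

theorem surjOn_iff_surjOn_ker (f : F) (T : AddSubgroup H) (hfT : ∀ a, f a ∈ T) (p : H →+ Q)
    (hp : Surjective (p ∘ f)) {S : Set G} (hS : ∀ a, a ∈ S ↔ p (f a) = 0) :
    (∀ x ∈ T, ∃ a, f a = x) ↔ ∀ x ∈ T, p x = 0 → ∃ a ∈ S, f a = x := by
  constructor
  · rintro hf x hx hpx
    obtain ⟨a, rfl⟩ := hf x hx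
    exact ⟨a, (hS a).2 hpx, rfl⟩
  · rintro hf x hx
    obtain ⟨b, hb⟩ := hp (p x)
    have hxb : p (x - f b) = 0 := by rw [map_sub, ← comp_apply (f := p), hb, sub_self]
    obtain ⟨a, -, ha⟩ := hf (x - f b) (T.sub_mem hx (hfT b)) hxb
    exact ⟨a + b, by rw [map_add, ha, sub_add_cancel]⟩

end AddGroupHom

namespace Ideal

variable {A ι : Type*} [CommRing A] {𝔞 : ι → Ideal A}

abbrev toQuotients (𝔞 : ι → Ideal A) : A →+* Π i, A ⧸ 𝔞 i :=
  RingHom.pi fun i => Quotient.mk (𝔞 i)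

theorem injective_toQuotients_iff_injOn (j : ι) :
    Injective (toQuotients 𝔞) ↔ Set.InjOn (toQuotients 𝔞) (𝔞 j) :=
  injective_iff_injOn_of_map_eq_zero_imp_mem _ (𝔞 j).zero_mem fun _ ha =>
    Quotient.eq_zero_iff_mem.1 (congrFun ha j)

variable [Preorder ι]

def chainCompletion (h𝔞 : Antitone 𝔞) : Subring (Π i, A ⧸ 𝔞 i) where
  carrier := {x | ∀ (i j : ι) (hij : i ≤ j), Quotient.factor (h𝔞 hij) (x j) = x i}
  mul_mem' hx hy i j hij := by simp only [Pi.mul_apply, map_mul, hx i j hij, hy i j hij]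
  one_mem' i j hij := map_one _
  add_mem' hx hy i j hij := by simp only [Pi.add_apply, map_add, hx i j hij, hy i j hij]
  zero_mem' i j hij := map_zero _
  neg_mem' hx i j hij := by simp only [Pi.neg_apply, map_neg, hx i j hij]

theorem toQuotients_mem_chainCompletion (h𝔞 : Antitone 𝔞) (a : A) :
    toQuotients 𝔞 a ∈ chainCompletion h𝔞 :=
  fun _ _ hij => Quotient.factor_mk (h𝔞 hij) a

theorem surjOn_chainCompletion_iff (h𝔞 : Antitone 𝔞) (j : ι) :
    (∀ x ∈ chainCompletion h𝔞, ∃ a, toQuotients 𝔞 a = x) ↔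
      ∀ x ∈ chainCompletion h𝔞, x j = 0 → ∃ a ∈ 𝔞 j, toQuotients 𝔞 a = x :=
  surjOn_iff_surjOn_ker _ (chainCompletion h𝔞).toAddSubgroup
    (toQuotients_mem_chainCompletion h𝔞) (Pi.evalAddMonoidHom _ j) Quotient.mk_surjective
    fun _ => Quotient.eq_zero_iff_mem.symm

end Ideal

/-- Let `(𝔞 i)` be a decreasing chain of ideals of `A`, `Â` the completion of `A` along this
chain (compatible families in `∏ i, A ⧸ 𝔞 i`) and `φ : A → Â` the canonical map. Then `φ` is
injective iff for every `j` the restriction `𝔞 j → 𝔞̂ j` of `φ` is injective, and `φ` is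
surjective (onto `Â`) iff for every `j` every element of `𝔞̂ j = ker (pr j)` is the image
under `φ` of an element of `𝔞 j`. -/
theorem stmt0 (A : Type*) [CommRing A] (𝔞 : ℕ → Ideal A) (h𝔞 : Antitone 𝔞)
    (Ahat : Set (Π i : ℕ, A ⧸ 𝔞 i))
    (hAhat : Ahat = {x | ∀ (i j : ℕ) (hij : i ≤ j),
      Ideal.Quotient.factor (S := 𝔞 j) (T := 𝔞 i) (h𝔞 hij) (x j) = x i})
    (φ : A → Π i : ℕ, A ⧸ 𝔞 i)
    (hφ : ∀ (a : A) (i : ℕ), φ a i = Ideal.Quotient.mk (𝔞 i) a) :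
    (Function.Injective φ ↔
      ∀ j : ℕ, ∀ a ∈ 𝔞 j, ∀ b ∈ 𝔞 j, φ a = φ b → a = b) ∧
    ((∀ x ∈ Ahat, ∃ a : A, φ a = x) ↔
      ∀ j : ℕ, ∀ x ∈ Ahat, x j = 0 → ∃ a ∈ 𝔞 j, φ a = x) := by
  obtain rfl : φ = Ideal.toQuotients 𝔞 := funext fun a => funext (hφ a)
  obtain rfl : Ahat = Ideal.chainCompletion h𝔞 := hAhat
  exact ⟨forall_const ℕ |>.symm.trans (forall_congr' Ideal.injective_toQuotients_iff_injOn),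
    forall_const ℕ |>.symm.trans (forall_congr' (Ideal.surjOn_chainCompletion_iff h𝔞))⟩
end

section
/- Let A be a commutative ring, p a prime number, and 𝔞 an ideal of A. Set 𝔟 := pA + 𝔞. Then for every i ≥ 1 one has the inclusions of ideals 𝔟^{2i−1}·𝔞 ⊆ p^i𝔞 + 𝔞^{i+1} ⊆ 𝔟^i·𝔞, where p^i𝔞 denotes the ideal {p^i·x : x ∈ 𝔞} generated by p^i-multiples of elements of 𝔞. Consequently the two decreasing chains of ideals (𝔟^i𝔞)_{i} and (p^i𝔞 + 𝔞^{i+1})_{i} are mutually cofinal and define the same linear topology on A. -/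
/-!
In the binomial expansion of `(pA + 𝔞)^(2i-1)` every term `p^k 𝔞^(2i-1-k)` lies in `p^i A`
when `k ≥ i` and in `𝔞^i` otherwise, so `𝔟^(2i-1) ⊆ p^i A + 𝔞^i`; multiplying by `𝔞` gives the
first inclusion. The second holds because `p` and `𝔞` both lie in `𝔟`.
-/

namespace Ideal

variable {R : Type*} [CommSemiring R] (I J : Ideal R)

lemma sup_pow_add_add_one_le (n m : ℕ) : (I ⊔ J) ^ (n + m + 1) ≤ I ^ (n + 1) ⊔ J ^ (m + 1) := by
  rw [← add_eq_sup, ← add_eq_sup, add_pow, sum_eq_sup]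
  refine Finset.sup_le fun k _ => ?_
  by_cases hk : n + 1 ≤ k
  · exact mul_le_left.trans (mul_le_left.trans ((pow_le_pow_right hk).trans le_sup_left))
  · exact mul_le_left.trans (mul_le_right.trans ((pow_le_pow_right (by omega)).trans le_sup_right))

lemma sup_pow_two_mul_sub_one_mul_le {i : ℕ} (hi : 1 ≤ i) :
    (I ⊔ J) ^ (2 * i - 1) * J ≤ I ^ i * J ⊔ J ^ (i + 1) := by
  obtain ⟨k, rfl⟩ := Nat.exists_eq_add_of_le' hi
  calc (I ⊔ J) ^ (2 * (k + 1) - 1) * J ≤ (I ^ (k + 1) ⊔ J ^ (k + 1)) * J := by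
        rw [show 2 * (k + 1) - 1 = k + k + 1 by omega]
        gcongr
        exact sup_pow_add_add_one_le I J k k
    _ = I ^ (k + 1) * J ⊔ J ^ (k + 1 + 1) := by rw [sup_mul, pow_succ J (k + 1)]

lemma pow_mul_sup_pow_succ_le (i : ℕ) : I ^ i * J ⊔ J ^ (i + 1) ≤ (I ⊔ J) ^ i * J := by
  rw [pow_succ]
  exact sup_le (by gcongr; exact le_sup_left) (by gcongr; exact le_sup_right)

end Ideal

theorem stmt2_general (A : Type*) [CommRing A] (p : ℕ) (𝔞 𝔟 : Ideal A)
    (h𝔟 : 𝔟 = Ideal.span {(p : A)} + 𝔞) :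
    (∀ i : ℕ, 1 ≤ i →
      𝔟 ^ (2 * i - 1) * 𝔞 ≤ Ideal.span {(p : A)} ^ i * 𝔞 + 𝔞 ^ (i + 1) ∧
      Ideal.span {(p : A)} ^ i * 𝔞 + 𝔞 ^ (i + 1) ≤ 𝔟 ^ i * 𝔞) ∧
    (∀ i : ℕ, ∃ j : ℕ, 𝔟 ^ j * 𝔞 ≤ Ideal.span {(p : A)} ^ i * 𝔞 + 𝔞 ^ (i + 1)) ∧
    (∀ i : ℕ, ∃ j : ℕ, Ideal.span {(p : A)} ^ j * 𝔞 + 𝔞 ^ (j + 1) ≤ 𝔟 ^ i * 𝔞) := by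
  subst h𝔟
  set P := Ideal.span {(p : A)}
  have lower (i : ℕ) (hi : 1 ≤ i) := Ideal.sup_pow_two_mul_sub_one_mul_le P 𝔞 hi
  have upper (i : ℕ) := Ideal.pow_mul_sup_pow_succ_le P 𝔞 i
  refine ⟨fun i hi => ⟨lower i hi, upper i⟩, fun i => ⟨2 * (i + 1) - 1, ?_⟩, fun i => ⟨i, upper i⟩⟩
  refine (lower (i + 1) (by omega)).trans (sup_le_sup ?_ ?_)
  · exact Ideal.mul_mono_left (Ideal.pow_le_pow_right i.le_succ)
  · exact Ideal.pow_le_pow_right (i + 1).le_succ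

/-- Let `𝔞` be an ideal of `A`, `p` a prime and `𝔟 = pA + 𝔞`. Then for every `i ≥ 1`,
`𝔟^{2i−1}·𝔞 ⊆ p^i𝔞 + 𝔞^{i+1} ⊆ 𝔟^i·𝔞`; consequently the chains `(𝔟^i𝔞)` and
`(p^i𝔞 + 𝔞^{i+1})` are mutually cofinal. -/
theorem stmt2 (A : Type*) [CommRing A] (p : ℕ) (hp : p.Prime) (𝔞 𝔟 : Ideal A)
    (h𝔟 : 𝔟 = Ideal.span {(p : A)} + 𝔞) :
    (∀ i : ℕ, 1 ≤ i →
      𝔟 ^ (2 * i - 1) * 𝔞 ≤ Ideal.span {(p : A)} ^ i * 𝔞 + 𝔞 ^ (i + 1) ∧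
      Ideal.span {(p : A)} ^ i * 𝔞 + 𝔞 ^ (i + 1) ≤ 𝔟 ^ i * 𝔞) ∧
    (∀ i : ℕ, ∃ j : ℕ, 𝔟 ^ j * 𝔞 ≤ Ideal.span {(p : A)} ^ i * 𝔞 + 𝔞 ^ (i + 1)) ∧
    (∀ i : ℕ, ∃ j : ℕ, Ideal.span {(p : A)} ^ j * 𝔞 + 𝔞 ^ (j + 1) ≤ 𝔟 ^ i * 𝔞) :=
  stmt2_general A p 𝔞 𝔟 h𝔟
end

section
/- Let A be a commutative ring and 𝔞 ⊆ A an ideal with ⋂_{n≥1} 𝔞ⁿ = 0. Let Y be a scheme equipped with a separated morphism s : Y → Spec A, and let x, y : Spec A → Y be two morphisms of schemes over Spec A (i.e. x ≫ s and y ≫ s both equal the identity of Spec A). If for every n ≥ 1 the composites Spec(A/𝔞ⁿ) → Spec A → Y along x and along y coincide (where Spec(A/𝔞ⁿ) → Spec A is induced by the quotient map A → A/𝔞ⁿ), then x = y. -/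
/-!
Since `s` is separated, the locus where the two sections `x` and `y` agree is a closed subscheme
`Z = Spec (A ⧸ J)` of `Spec A`, and every `Spec (A ⧸ 𝔞ⁿ)` factors through it. Hence `J ⊆ 𝔞ⁿ` for
all `n ≥ 1`, so `J = 0`, `Z` is all of `Spec A`, and `x = y`.
-/

open AlgebraicGeometry CategoryTheory Limits

universe u

namespace AlgebraicGeometry

lemma exists_isClosedImmersion_equalizer_of_isSeparated {X Y S : Scheme.{u}} (s : Y ⟶ S)
    [IsSeparated s] (f g : X ⟶ Y) (h : f ≫ s = g ≫ s) :
    ∃ (Z : Scheme.{u}) (i : Z ⟶ X), IsClosedImmersion i ∧ i ≫ f = i ≫ g ∧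
      ∀ {T : Scheme.{u}} (t : T ⟶ X), t ≫ f = t ≫ g → ∃ e : T ⟶ Z, e ≫ i = t := by
  let f' : Over.mk (f ≫ s) ⟶ Over.mk s := Over.homMk f
  let g' : Over.mk (f ≫ s) ⟶ Over.mk s := Over.homMk g
  have : IsSeparated (Over.mk s).hom := ‹_›
  refine ⟨_, (equalizer.ι f' g').left, inferInstance, congr($(equalizer.condition f' g').left),
    fun t ht ↦ ?_⟩
  let t' : Over.mk (t ≫ f ≫ s) ⟶ Over.mk (f ≫ s) := Over.homMk t
  exact ⟨(equalizer.lift t' (by ext1; exact ht)).left,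
    congr($(equalizer.lift_ι t' (by ext1; exact ht)).left)⟩

lemma mem_of_SpecMap_quotient_mk_factors {A : Type u} [CommRing A] {Z : Scheme.{u}}
    (i : Z ⟶ Spec (.of A)) (I : Ideal A) (e : Spec (.of (A ⧸ I)) ⟶ Z)
    (he : e ≫ i = Spec.map (CommRingCat.ofHom (Ideal.Quotient.mk I))) {a : A}
    (ha : i.appTop ((Scheme.ΓSpecIso (.of A)).inv a) = 0) : a ∈ I := by
  have hnat := congr((Scheme.ΓSpecIso (.of A)).inv ≫ $(Scheme.ΓSpecIso_naturality
    (CommRingCat.ofHom (Ideal.Quotient.mk I))))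
  rw [Iso.inv_hom_id_assoc, ← he, Scheme.Hom.comp_appTop] at hnat
  rw [← Ideal.Quotient.eq_zero_iff_mem]
  simpa [ha] using congr($hnat a).symm

lemma IsClosedImmersion.isIso_of_forall_SpecMap_quotient_mk_factors {A : Type u} [CommRing A]
    {Z : Scheme.{u}} (i : Z ⟶ Spec (.of A)) [IsClosedImmersion i] {κ : Type*} (I : κ → Ideal A)
    (hI : ⨅ k, I k = ⊥)
    (hfac : ∀ k, ∃ e, e ≫ i = Spec.map (CommRingCat.ofHom (Ideal.Quotient.mk (I k)))) :
    IsIso i := by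
  refine isIso_of_injective_of_isAffine ((injective_iff_map_eq_zero _).2 fun u hu ↦ ?_)
  obtain ⟨a, rfl⟩ := (Scheme.ΓSpecIso (.of A)).commRingCatIsoToRingEquiv.symm.surjective u
  have ha : a ∈ ⨅ k, I k := Ideal.mem_iInf.2 fun k ↦
    (hfac k).elim fun e he ↦ mem_of_SpecMap_quotient_mk_factors i (I k) e he hu
  rw [hI, Ideal.mem_bot] at ha
  simp [ha]

end AlgebraicGeometry

/-- Let `𝔞 ⊆ A` be an ideal with `⋂_{n≥1} 𝔞ⁿ = 0`, `Y` a scheme with a separated morphism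
`s : Y → Spec A`, and `x, y : Spec A → Y` two sections of `s`. If for every `n ≥ 1` the
composites `Spec (A/𝔞ⁿ) → Spec A → Y` along `x` and along `y` coincide, then `x = y`. -/
theorem stmt3 (A : Type u) [CommRing A] (𝔞 : Ideal A)
    (h𝔞 : (⨅ n : ℕ, 𝔞 ^ (n + 1)) = ⊥)
    (Y : Scheme.{u}) (s : Y ⟶ Spec (CommRingCat.of A)) [IsSeparated s]
    (x y : Spec (CommRingCat.of A) ⟶ Y)
    (hx : x ≫ s = 𝟙 _) (hy : y ≫ s = 𝟙 _)
    (hxy : ∀ n : ℕ, 1 ≤ n →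
      Spec.map (CommRingCat.ofHom (Ideal.Quotient.mk (𝔞 ^ n))) ≫ x =
        Spec.map (CommRingCat.ofHom (Ideal.Quotient.mk (𝔞 ^ n))) ≫ y) :
    x = y := by
  obtain ⟨Z, i, _, hixy, hlift⟩ :=
    exists_isClosedImmersion_equalizer_of_isSeparated s x y (hx.trans hy.symm)
  have : IsIso i := IsClosedImmersion.isIso_of_forall_SpecMap_quotient_mk_factors i
    (fun n ↦ 𝔞 ^ (n + 1)) h𝔞 fun n ↦ hlift _ (hxy (n + 1) n.succ_pos)
  exact (cancel_epi i).1 hixy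
end

section
/- Let C be a commutative ring, M a C-module, and C ⊕ M the trivial square-zero extension, with first projection fst : C ⊕ M → C (a ring homomorphism). Let K be the kernel of the induced ring homomorphism 𝕎(fst) : 𝕎(C ⊕ M) → 𝕎(C). Then: (1) 𝕎(fst) is a split surjection (split by 𝕎 applied to the inclusion C → C ⊕ M); (2) K is a square-zero ideal, K·K = 0; (3) the map φ : K → ∏_{n∈ℕ} M sending x to the family of second components of its Witt coefficients, φ(x)_n := snd(x.coeff n), is an isomorphism of additive groups, and for every z ∈ 𝕎(C ⊕ M) and every x ∈ K one has φ(z·x)_n = w_n(𝕎(fst)(z)) · φ(x)_n for all n. In other words, 𝕎(C ⊕ M) is the square-zero extension of 𝕎(C) by the 𝕎(C)-module ∏_n M_{[w_n]}, where 𝕎(C) acts on the n-th factor through the n-th ghost component w_n. -/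
open WittVector TrivSqZeroExt MvPolynomial Finset

set_option linter.unusedSectionVars false

namespace Stmt5Aux

variable (p : ℕ) [hp : Fact p.Prime]

section basic
variable {C : Type*} [CommRing C] {M : Type*} [AddCommGroup M] [Module C M]
  [Module Cᵐᵒᵖ M] [IsCentralScalar C M]

theorem pow_eq_zero_of_fst {a : TrivSqZeroExt C M} (ha : a.fst = 0) {k : ℕ} (hk : 2 ≤ k) :
    a ^ k = 0 := by
  have haa : a * a = 0 := by
    have : a = inr a.snd := TrivSqZeroExt.ext ha rfl
    rw [this, inr_mul_inr]
  obtain ⟨m, rfl⟩ : ∃ m, k = m + 2 := ⟨k - 2, by omega⟩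
  rw [pow_succ, pow_succ, mul_assoc, haa, mul_zero]

theorem mul_inr' (a : TrivSqZeroExt C M) (m : M) : a * inr m = inr (a.fst • m) := by
  refine TrivSqZeroExt.ext ?_ ?_
  · simp [fst_mul]
  · simp [snd_mul]

theorem ghost_inr (x : WittVector p (TrivSqZeroExt C M)) (hx : ∀ k, (x.coeff k).fst = 0)
    (n : ℕ) : ghostComponent n x = (p : TrivSqZeroExt C M) ^ n * x.coeff n := by
  rw [ghostComponent_apply, aeval_wittPolynomial]
  rw [Finset.sum_eq_single_of_mem n (Finset.self_mem_range_succ n)]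
  · rw [Nat.sub_self, pow_zero, pow_one]
  · intro i hi hne
    rw [pow_eq_zero_of_fst (hx i), mul_zero]
    have h1 : 1 ≤ n - i := by rw [Finset.mem_range] at hi; omega
    calc 2 ≤ p := hp.out.two_le
    _ = p ^ 1 := (pow_one p).symm
    _ ≤ p ^ (n - i) := Nat.pow_le_pow_right hp.out.pos h1

theorem ghost_map_nat {R S : Type*} [CommRing R] [CommRing S] (φ : R →+* S)
    (x : WittVector p R) (n : ℕ) :
    ghostComponent n (WittVector.map φ x) = φ (ghostComponent n x) := by
  rw [ghostComponent_apply, ghostComponent_apply, aeval_wittPolynomial, aeval_wittPolynomial,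
    map_sum]
  refine Finset.sum_congr rfl fun i _ => ?_
  simp [WittVector.map_coeff]

theorem mul_key_of_inj
    (hinj : Function.Injective
      (ghostMap : WittVector p (TrivSqZeroExt C M) → ℕ → TrivSqZeroExt C M))
    (z x : WittVector p (TrivSqZeroExt C M)) (hx : ∀ k, (x.coeff k).fst = 0) :
    z * x = WittVector.mk p fun n => inr ((ghostComponent n z).fst • (x.coeff n).snd) := by
  apply hinj
  set v := WittVector.mk p fun n =>
    inr (R := C) (M := M) ((ghostComponent n z).fst • (x.coeff n).snd) with hv
  have hmk : ∀ k, (v.coeff k).fst = 0 := by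
    intro k; simp [hv, WittVector.coeff_mk]
  funext n
  rw [ghostMap_apply, ghostMap_apply, map_mul, ghost_inr p x hx, ghost_inr p v hmk, hv,
    WittVector.coeff_mk]
  have hxn : x.coeff n = inr (x.coeff n).snd := (TrivSqZeroExt.ext (hx n) rfl)
  rw [hxn, mul_left_comm, mul_inr', snd_inr]

theorem add_key_of_inj
    (hinj : Function.Injective
      (ghostMap : WittVector p (TrivSqZeroExt C M) → ℕ → TrivSqZeroExt C M))
    (x y : WittVector p (TrivSqZeroExt C M)) (hx : ∀ k, (x.coeff k).fst = 0)
    (hy : ∀ k, (y.coeff k).fst = 0) :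
    x + y = WittVector.mk p fun n => x.coeff n + y.coeff n := by
  apply hinj
  set v := WittVector.mk p fun n => x.coeff n + y.coeff n with hv
  have hmk : ∀ k, (v.coeff k).fst = 0 := by
    intro k; simp [hv, WittVector.coeff_mk, fst_add, hx, hy]
  funext n
  rw [ghostMap_apply, ghostMap_apply, map_add, ghost_inr p x hx, ghost_inr p y hy,
    ghost_inr p v hmk, hv, WittVector.coeff_mk, mul_add]

end basic

/-! ### The square-zero-extension ring hom construction -/

section hom
variable {R S MR MS : Type*} [CommRing R] [CommRing S]
    [AddCommGroup MR] [Module R MR] [Module Rᵐᵒᵖ MR] [IsCentralScalar R MR]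
    [AddCommGroup MS] [Module S MS] [Module Sᵐᵒᵖ MS] [IsCentralScalar S MS]

/-- A ring hom between trivial square-zero extensions built from a ring hom and a
semilinear additive map. -/
def tszeHom (f : R →+* S) (g : MR →+ MS) (hg : ∀ (c : R) (m : MR), g (c • m) = f c • g m) :
    TrivSqZeroExt R MR →+* TrivSqZeroExt S MS where
  toFun a := inl (f a.fst) + inr (g a.snd)
  map_one' := by refine TrivSqZeroExt.ext ?_ ?_ <;> simp
  map_mul' a b := by
    refine TrivSqZeroExt.ext ?_ ?_
    · simp [fst_mul]
    · simp only [snd_mul, snd_add, snd_inl, snd_inr, fst_add, fst_inl, fst_inr, add_zero,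
        zero_add, map_add, op_smul_eq_smul, hg]
  map_zero' := by refine TrivSqZeroExt.ext ?_ ?_ <;> simp
  map_add' a b := by refine TrivSqZeroExt.ext ?_ ?_ <;> simp [add_add_add_comm]

@[simp] theorem fst_tszeHom (f : R →+* S) (g : MR →+ MS) (hg) (a : TrivSqZeroExt R MR) :
    (tszeHom f g hg a).fst = f a.fst := by simp [tszeHom]

@[simp] theorem snd_tszeHom (f : R →+* S) (g : MR →+ MS) (hg) (a : TrivSqZeroExt R MR) :
    (tszeHom f g hg a).snd = g a.snd := by simp [tszeHom]

theorem tszeHom_injective (f : R →+* S) (g : MR →+ MS) (hg) (hf : Function.Injective f)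
    (hginj : Function.Injective g) : Function.Injective (tszeHom f g hg) := by
  intro a b hab
  refine TrivSqZeroExt.ext (hf ?_) (hginj ?_)
  · simpa using congrArg TrivSqZeroExt.fst hab
  · simpa using congrArg TrivSqZeroExt.snd hab

end hom

/-! ### The universal cases -/

local notation "C₀" => MvPolynomial ℕ ℤ
local notation "M₀" => (ℕ ⊕ ℕ) →₀ MvPolynomial ℕ ℤ
local notation "C₁" => MvPolynomial ℕ ℚ
local notation "M₁" => (ℕ ⊕ ℕ) →₀ MvPolynomial ℕ ℚ

noncomputable def invertible_p : Invertible (p : TrivSqZeroExt C₁ M₁) := by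
  letI h1 : Invertible ((p : ℚ)) :=
    invertibleOfNonzero (by exact_mod_cast hp.out.ne_zero)
  have h2 := Invertible.map ((inlHom C₁ M₁).comp (algebraMap ℚ C₁)) ((p : ℚ))
  rwa [map_natCast] at h2

theorem ghost_inj_Q :
    Function.Injective
      (ghostMap : WittVector p (TrivSqZeroExt C₁ M₁) → ℕ → TrivSqZeroExt C₁ M₁) := by
  letI := invertible_p p
  exact (ghostMap.bijective_of_invertible p (TrivSqZeroExt C₁ M₁)).injective

theorem hg_psi : ∀ (c : C₀) (m : M₀),
    (Finsupp.mapRange.addMonoidHom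
        (MvPolynomial.map (Int.castRingHom ℚ)).toAddMonoidHom) (c • m) =
      (MvPolynomial.map (Int.castRingHom ℚ)) c •
        (Finsupp.mapRange.addMonoidHom
          (MvPolynomial.map (Int.castRingHom ℚ)).toAddMonoidHom) m := by
  intro c m
  ext i
  simp [Finsupp.mapRange_apply]

/-- The injection from the `ℤ`-universal square-zero extension into the `ℚ` one. -/
noncomputable def psi : TrivSqZeroExt C₀ M₀ →+* TrivSqZeroExt C₁ M₁ :=
  tszeHom (MvPolynomial.map (Int.castRingHom ℚ))
    (Finsupp.mapRange.addMonoidHom (MvPolynomial.map (Int.castRingHom ℚ)).toAddMonoidHom)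
    hg_psi

@[simp] theorem fst_psi (a : TrivSqZeroExt C₀ M₀) :
    (psi a).fst = MvPolynomial.map (Int.castRingHom ℚ) a.fst := by
  rw [psi, fst_tszeHom]

@[simp] theorem snd_psi (a : TrivSqZeroExt C₀ M₀) :
    (psi a).snd = (Finsupp.mapRange.addMonoidHom
      (MvPolynomial.map (Int.castRingHom ℚ)).toAddMonoidHom) a.snd := by
  rw [psi, snd_tszeHom]

theorem psi_injective : Function.Injective psi := by
  apply tszeHom_injective
  · exact MvPolynomial.map_injective _ Int.cast_injective
  · exact Finsupp.mapRange_injective _ (map_zero _)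
      (MvPolynomial.map_injective _ Int.cast_injective)

theorem mul_key_int (z x : WittVector p (TrivSqZeroExt C₀ M₀))
    (hx : ∀ k, (x.coeff k).fst = 0) :
    z * x = WittVector.mk p fun n => inr ((ghostComponent n z).fst • (x.coeff n).snd) := by
  apply WittVector.map_injective psi psi_injective
  rw [RingHom.map_mul]
  rw [mul_key_of_inj p (ghost_inj_Q p) (WittVector.map psi z) (WittVector.map psi x)
    (fun k => by rw [WittVector.map_coeff]; simp [psi, hx k])]
  refine WittVector.ext fun n => ?_
  simp only [WittVector.map_coeff, WittVector.coeff_mk]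
  refine TrivSqZeroExt.ext ?_ ?_
  · rw [fst_inr, fst_psi, fst_inr, map_zero]
  · simp only [snd_inr, snd_psi]
    rw [hg_psi, ghost_map_nat, fst_psi]

theorem add_key_int (x y : WittVector p (TrivSqZeroExt C₀ M₀))
    (hx : ∀ k, (x.coeff k).fst = 0) (hy : ∀ k, (y.coeff k).fst = 0) :
    x + y = WittVector.mk p fun n => x.coeff n + y.coeff n := by
  apply WittVector.map_injective psi psi_injective
  rw [RingHom.map_add]
  rw [add_key_of_inj p (ghost_inj_Q p) (WittVector.map psi x) (WittVector.map psi y)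
    (fun k => by rw [WittVector.map_coeff]; simp [psi, hx k])
    (fun k => by rw [WittVector.map_coeff]; simp [psi, hy k])]
  refine WittVector.ext fun n => ?_
  simp only [WittVector.map_coeff, WittVector.coeff_mk]
  rw [RingHom.map_add]

/-! ### The general case, by descent from the universal case -/

section general
variable {C : Type*} [CommRing C] {M : Type*} [AddCommGroup M] [Module C M]
  [Module Cᵐᵒᵖ M] [IsCentralScalar C M]

theorem mul_key_gen (z x : WittVector p (TrivSqZeroExt C M))
    (hx : ∀ k, (x.coeff k).fst = 0) (n : ℕ) :
    (z * x).coeff n = inr ((ghostComponent n z).fst • (x.coeff n).snd) := by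
  classical
  set f : C₀ →+* C := (MvPolynomial.aeval fun k => (z.coeff k).fst).toRingHom with hf
  set t : ℕ ⊕ ℕ → M :=
    Sum.elim (fun k => (z.coeff k).snd) (fun k => (x.coeff k).snd) with ht
  set g : M₀ →+ M := Finsupp.liftAddHom fun i =>
    { toFun := fun c => f c • t i
      map_zero' := by simp
      map_add' := fun a b => by simp [add_smul] } with hgdef
  have hgsingle : ∀ (i : ℕ ⊕ ℕ) (c : C₀), g (Finsupp.single i c) = f c • t i := by
    intro i c
    rw [hgdef, Finsupp.liftAddHom_apply_single]
    rfl
  have hg : ∀ (c : C₀) (m : M₀), g (c • m) = f c • g m := by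
    intro c m
    rw [hgdef]
    simp only [Finsupp.liftAddHom_apply, AddMonoidHom.coe_mk, ZeroHom.coe_mk]
    rw [Finsupp.sum_smul_index' (fun i => by simp), Finsupp.smul_sum]
    exact Finsupp.sum_congr fun i _ => by simp [smul_eq_mul, map_mul, mul_smul]
  set Φ := tszeHom f g hg with hΦdef
  set z₀ : WittVector p (TrivSqZeroExt C₀ M₀) :=
    WittVector.mk p fun k => inl (X k) + inr (Finsupp.single (Sum.inl k) 1) with hz₀
  set x₀ : WittVector p (TrivSqZeroExt C₀ M₀) :=
    WittVector.mk p fun k => inr (Finsupp.single (Sum.inr k) 1) with hx₀def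
  have hΦz : WittVector.map Φ z₀ = z := by
    refine WittVector.ext fun k => ?_
    rw [WittVector.map_coeff, hz₀, WittVector.coeff_mk]
    refine TrivSqZeroExt.ext ?_ ?_
    · rw [hΦdef, fst_tszeHom]
      simp [hf]
    · rw [hΦdef, snd_tszeHom]
      simp only [snd_add, snd_inl, snd_inr, zero_add]
      rw [hgsingle, map_one, one_smul, ht]
      simp
  have hΦx : WittVector.map Φ x₀ = x := by
    refine WittVector.ext fun k => ?_
    rw [WittVector.map_coeff, hx₀def, WittVector.coeff_mk]
    refine TrivSqZeroExt.ext ?_ ?_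
    · rw [hΦdef, fst_tszeHom]
      simp [(hx k).symm]
    · rw [hΦdef, snd_tszeHom]
      simp only [snd_inr]
      rw [hgsingle, map_one, one_smul, ht]
      simp
  have hx₀ : ∀ k, (x₀.coeff k).fst = 0 := by
    intro k; rw [hx₀def]; simp [WittVector.coeff_mk]
  have key := mul_key_int p z₀ x₀ hx₀
  have key2 := congrArg (fun w => (WittVector.map Φ w).coeff n) key
  simp only [RingHom.map_mul, hΦz, hΦx, WittVector.map_coeff, WittVector.coeff_mk] at key2
  rw [key2]
  refine TrivSqZeroExt.ext ?_ ?_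
  · rw [hΦdef, fst_tszeHom]; simp
  · rw [hΦdef, snd_tszeHom, snd_inr, snd_inr, hg, hx₀def, WittVector.coeff_mk, snd_inr,
      hgsingle, map_one, one_smul]
    have : f (ghostComponent n z₀).fst = (ghostComponent n z).fst := by
      rw [← fst_tszeHom f g hg, ← hΦdef, ← ghost_map_nat, hΦz]
    rw [this, ht]
    simp

theorem add_key_gen (x y : WittVector p (TrivSqZeroExt C M))
    (hx : ∀ k, (x.coeff k).fst = 0) (hy : ∀ k, (y.coeff k).fst = 0) (n : ℕ) :
    (x + y).coeff n = x.coeff n + y.coeff n := by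
  classical
  set f : C₀ →+* C := (MvPolynomial.aeval fun _ => (0 : C)).toRingHom with hf
  set t : ℕ ⊕ ℕ → M :=
    Sum.elim (fun k => (x.coeff k).snd) (fun k => (y.coeff k).snd) with ht
  set g : M₀ →+ M := Finsupp.liftAddHom fun i =>
    { toFun := fun c => f c • t i
      map_zero' := by simp
      map_add' := fun a b => by simp [add_smul] } with hgdef
  have hgsingle : ∀ (i : ℕ ⊕ ℕ) (c : C₀), g (Finsupp.single i c) = f c • t i := by
    intro i c
    rw [hgdef, Finsupp.liftAddHom_apply_single]
    rfl
  have hg : ∀ (c : C₀) (m : M₀), g (c • m) = f c • g m := by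
    intro c m
    rw [hgdef]
    simp only [Finsupp.liftAddHom_apply, AddMonoidHom.coe_mk, ZeroHom.coe_mk]
    rw [Finsupp.sum_smul_index' (fun i => by simp), Finsupp.smul_sum]
    exact Finsupp.sum_congr fun i _ => by simp [smul_eq_mul, map_mul, mul_smul]
  set Φ := tszeHom f g hg with hΦdef
  set x₀ : WittVector p (TrivSqZeroExt C₀ M₀) :=
    WittVector.mk p fun k => inr (Finsupp.single (Sum.inl k) 1) with hx₀def
  set y₀ : WittVector p (TrivSqZeroExt C₀ M₀) :=
    WittVector.mk p fun k => inr (Finsupp.single (Sum.inr k) 1) with hy₀def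
  have hΦx : WittVector.map Φ x₀ = x := by
    refine WittVector.ext fun k => ?_
    rw [WittVector.map_coeff, hx₀def, WittVector.coeff_mk]
    refine TrivSqZeroExt.ext ?_ ?_
    · rw [hΦdef, fst_tszeHom]
      simp [(hx k).symm]
    · rw [hΦdef, snd_tszeHom]
      simp only [snd_inr]
      rw [hgsingle, map_one, one_smul, ht]
      simp
  have hΦy : WittVector.map Φ y₀ = y := by
    refine WittVector.ext fun k => ?_
    rw [WittVector.map_coeff, hy₀def, WittVector.coeff_mk]
    refine TrivSqZeroExt.ext ?_ ?_
    · rw [hΦdef, fst_tszeHom]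
      simp [(hy k).symm]
    · rw [hΦdef, snd_tszeHom]
      simp only [snd_inr]
      rw [hgsingle, map_one, one_smul, ht]
      simp
  have hx₀ : ∀ k, (x₀.coeff k).fst = 0 := by
    intro k; rw [hx₀def]; simp [WittVector.coeff_mk]
  have hy₀ : ∀ k, (y₀.coeff k).fst = 0 := by
    intro k; rw [hy₀def]; simp [WittVector.coeff_mk]
  have key := add_key_int p x₀ y₀ hx₀ hy₀
  have key2 := congrArg (fun w => (WittVector.map Φ w).coeff n) key
  simp only [RingHom.map_add, hΦx, hΦy, WittVector.map_coeff, WittVector.coeff_mk] at key2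
  rw [key2, ← WittVector.map_coeff Φ x₀, ← WittVector.map_coeff Φ y₀, hΦx, hΦy]

end general

end Stmt5Aux

open Stmt5Aux in
/-- Let `C ⊕ M` be the trivial square-zero extension of a commutative ring `C` by a
`C`-module `M`, `F = 𝕎(fst) : 𝕎(C ⊕ M) → 𝕎(C)` (acting coefficientwise by `fst`),
`G = 𝕎(inl)` and `K = ker F`. Then `F ∘ G = id` (so `F` is a split surjection), `K·K = 0`,
and the map `K → ∏ₙ M`, `x ↦ (snd (x.coeff n))ₙ`, is an additive bijection satisfying
`φ(z·x)ₙ = wₙ(F z) • φ(x)ₙ`; i.e. `𝕎(C ⊕ M)` is the square-zero extension of `𝕎(C)` by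
`∏ₙ M_{[wₙ]}`. -/
theorem stmt5 (p : ℕ) [Fact p.Prime] (C : Type*) [CommRing C]
    (M : Type*) [AddCommGroup M] [Module C M] [Module Cᵐᵒᵖ M] [IsCentralScalar C M]
    (F : WittVector p (TrivSqZeroExt C M) →+* WittVector p C)
    (hF : ∀ (x : WittVector p (TrivSqZeroExt C M)) (n : ℕ),
      (F x).coeff n = (x.coeff n).fst)
    (G : WittVector p C →+* WittVector p (TrivSqZeroExt C M))
    (hG : ∀ (x : WittVector p C) (n : ℕ), (G x).coeff n = TrivSqZeroExt.inl (x.coeff n))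
    (K : Ideal (WittVector p (TrivSqZeroExt C M))) (hK : K = RingHom.ker F) :
    (∀ x : WittVector p C, F (G x) = x) ∧
    K * K = ⊥ ∧
    Function.Bijective (fun x : K =>
      fun n : ℕ => ((x : WittVector p (TrivSqZeroExt C M)).coeff n).snd) ∧
    (∀ x ∈ K, ∀ y ∈ K, ∀ n : ℕ,
      ((x + y : WittVector p (TrivSqZeroExt C M)).coeff n).snd =
        (x.coeff n).snd + (y.coeff n).snd) ∧
    (∀ z : WittVector p (TrivSqZeroExt C M), ∀ x ∈ K, ∀ n : ℕ,
      ((z * x).coeff n).snd = WittVector.ghostComponent n (F z) • (x.coeff n).snd) := by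
  have hker : ∀ w : WittVector p (TrivSqZeroExt C M), w ∈ K ↔ ∀ n, (w.coeff n).fst = 0 := by
    intro w
    rw [hK, RingHom.mem_ker]
    constructor
    · intro h n
      rw [← hF, h, WittVector.zero_coeff]
    · intro h
      refine WittVector.ext fun n => ?_
      rw [hF, h n, WittVector.zero_coeff]
  have hFmap : F = WittVector.map (TrivSqZeroExt.fstHom ℤ C M).toRingHom :=
    RingHom.ext fun w => WittVector.ext fun n => by rw [hF, WittVector.map_coeff]; rfl
  have hgh : ∀ (z : WittVector p (TrivSqZeroExt C M)) (n : ℕ),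
      WittVector.ghostComponent n (F z) = (WittVector.ghostComponent n z).fst := by
    intro z n
    rw [hFmap, Stmt5Aux.ghost_map_nat]
    rfl
  refine ⟨?_, ?_, ⟨?_, ?_⟩, ?_, ?_⟩
  · intro x
    refine WittVector.ext fun n => ?_
    rw [hF, hG, TrivSqZeroExt.fst_inl]
  · refine le_antisymm (Ideal.mul_le.2 fun r hr s hs => ?_) bot_le
    have hs' := (hker s).1 hs
    have hr0 : F r = 0 := by rw [hK, RingHom.mem_ker] at hr; exact hr
    have h0 : r * s = 0 := by
      refine WittVector.ext fun n => ?_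
      rw [Stmt5Aux.mul_key_gen p r s hs' n, ← hgh, hr0, map_zero, zero_smul,
        TrivSqZeroExt.inr_zero, WittVector.zero_coeff]
    rw [h0]
    exact Ideal.zero_mem ⊥
  · intro a b hab
    apply Subtype.ext
    refine WittVector.ext fun n => ?_
    refine TrivSqZeroExt.ext ?_ ?_
    · rw [(hker _).1 a.2 n, (hker _).1 b.2 n]
    · exact congrFun hab n
  · intro m
    refine ⟨⟨WittVector.mk p fun n => TrivSqZeroExt.inr (m n), (hker _).2 fun n => by
      simp [WittVector.coeff_mk]⟩, ?_⟩
    funext n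
    simp [WittVector.coeff_mk]
  · intro x hx y hy n
    rw [Stmt5Aux.add_key_gen p x y ((hker x).1 hx) ((hker y).1 hy) n, TrivSqZeroExt.snd_add]
  · intro z x hx n
    rw [Stmt5Aux.mul_key_gen p z x ((hker x).1 hx) n, TrivSqZeroExt.snd_inr, hgh]
end

section
/- Let p be a prime number and n a natural number with base-p digit expansion n = Σ_l m_l p^l, where m_l is the l-th digit of n in base p (so 0 ≤ m_l ≤ p−1). Then the p-adic valuation of n! equals Σ_l m_l · v_p((p^l)!); that is, padicValNat p (n!) = Σ_l (l-th base-p digit of n) · padicValNat p ((p^l)!). -/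
open Nat Finset

/-!
Multiply both sides by `p - 1`. Legendre's formula `(p - 1) v_p(n!) = n - s_p(n)` turns the
left side into `n - s_p(n)` and each `v_p((p^l)!)` into `p^l - 1`, since `p^l` has digit sum `1`.
The right side becomes `∑ m_l (p^l - 1) = ∑ m_l p^l - ∑ m_l`, which is again `n - s_p(n)`.
-/

theorem List.sum_range_length_getD {M : Type*} [AddCommMonoid M] (L : List M) :
    ∑ i ∈ Finset.range L.length, L.getD i 0 = L.sum := by
  rw [Finset.sum_range, ← Fin.sum_univ_getElem]
  simp

theorem Nat.sum_range_length_getD_mul_pow (b : ℕ) (L : List ℕ) :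
    ∑ i ∈ range L.length, L.getD i 0 * b ^ i = ofDigits b L := by
  rw [Finset.sum_range, ofDigits_eq_sum_mapIdx, List.mapIdx_eq_ofFn, List.sum_ofFn]
  simp

theorem Nat.sum_range_length_getD_mul_pow_sub_one {b : ℕ} (hb : 0 < b) (L : List ℕ) :
    ∑ i ∈ range L.length, L.getD i 0 * (b ^ i - 1) = ofDigits b L - L.sum := by
  simp_rw [Nat.mul_sub_one]
  rw [sum_tsub_distrib _ fun i _ => Nat.le_mul_of_pos_right _ (Nat.pow_pos hb),
    sum_range_length_getD_mul_pow, List.sum_range_length_getD]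

theorem Nat.digits_sum_base_pow {b : ℕ} (hb : 1 < b) (k : ℕ) : (b.digits (b ^ k)).sum = 1 := by
  have h := digits_base_pow_mul hb (k := k) one_pos
  rw [mul_one, digits_of_lt b 1 one_ne_zero hb] at h
  simp [h]

theorem sub_one_mul_padicValNat_factorial_pow (p : ℕ) [hp : Fact p.Prime] (k : ℕ) :
    (p - 1) * padicValNat p (p ^ k)! = p ^ k - 1 := by
  rw [sub_one_mul_padicValNat_factorial, digits_sum_base_pow hp.out.one_lt]

/-- Legendre-type formula: for a prime `p` and `n` with base-`p` digits `m_l`,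
the `p`-adic valuation of `n!` equals `∑_l m_l · v_p((p^l)!)`. -/
theorem stmt6 (p : ℕ) (hp : p.Prime) (n : ℕ) :
    padicValNat p (n !) =
      ∑ l ∈ Finset.range (Nat.digits p n).length,
        (Nat.digits p n).getD l 0 * padicValNat p ((p ^ l)!) := by
  have : Fact p.Prime := ⟨hp⟩
  apply Nat.eq_of_mul_eq_mul_left (Nat.sub_pos_of_lt hp.one_lt)
  simp_rw [Finset.mul_sum, mul_left_comm (p - 1), sub_one_mul_padicValNat_factorial_pow,
    sum_range_length_getD_mul_pow_sub_one hp.pos, ofDigits_digits,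
    sub_one_mul_padicValNat_factorial]
end

section
/- Let R be a commutative ring and p a prime number. For every n ∈ ℕ, the set 𝔞_n(R) := {x ∈ R : p^{n−i}·x^{p^i} = 0 for all 0 ≤ i ≤ n} (i.e. pⁿx = p^{n−1}x^p = ⋯ = p·x^{p^{n−1}} = x^{pⁿ} = 0) is an ideal of R. Moreover these ideals form an ascending chain: 𝔞_n(R) ⊆ 𝔞_{n+1}(R). -/
/-- The subset `𝔞_n(R) = {x ∈ R : p^{n−i}·x^{p^i} = 0 for all 0 ≤ i ≤ n}`. -/
def wittAnnSet (R : Type*) [CommRing R] (p n : ℕ) : Set R :=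
  {x | ∀ i ≤ n, (p : R) ^ (n - i) * x ^ p ^ i = 0}

lemma wittAux_pow_dvd_choose {p : ℕ} (hp : p.Prime) {i k : ℕ} (hk : 0 < k) (hki : k ≤ p ^ i) :
    p ^ (i - k.factorization p) ∣ (p ^ i).choose k := by
  set j := k.factorization p with hj
  have hpj : p ^ j ∣ k := Nat.ordProj_dvd k p
  have hji : j ≤ i := by
    have h1 : p ^ j ≤ p ^ i := le_trans (Nat.le_of_dvd hk hpj) hki
    exact (Nat.pow_le_pow_iff_right hp.one_lt).mp h1
  rcases eq_or_lt_of_le hki with heq | hlt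
  · subst heq
    have : j = i := by rw [hj, hp.factorization_pow]; simp
    simp [this]
  · -- key identity : p^i * (p^i - 1).choose (k-1) = (p^i).choose k * k
    have hpi : 0 < p ^ i := pow_pos hp.pos i
    have key : p ^ i * (p ^ i - 1).choose (k - 1) = (p ^ i).choose k * k := by
      have := Nat.add_one_mul_choose_eq (p ^ i - 1) (k - 1)
      simpa [Nat.succ_eq_add_one, Nat.sub_add_cancel hpi, Nat.sub_add_cancel hk] using this
    have hdvd : p ^ i ∣ (p ^ i).choose k * k := Dvd.intro _ key
    -- write k = p^j * m with ¬ p ∣ m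
    set m := k / p ^ j with hm
    have hkm : p ^ j * m = k := Nat.ordProj_mul_ordCompl_eq_self k p
    have hpm : ¬ p ∣ m := Nat.not_dvd_ordCompl hp hk.ne'
    have hdvd2 : p ^ j * p ^ (i - j) ∣ p ^ j * ((p ^ i).choose k * m) := by
      rw [← pow_add, Nat.add_sub_cancel' hji]
      calc p ^ i ∣ (p ^ i).choose k * k := hdvd
        _ = p ^ j * ((p ^ i).choose k * m) := by rw [← hkm]; ring
    have hdvd3 : p ^ (i - j) ∣ (p ^ i).choose k * m :=
      (mul_dvd_mul_iff_left (a := p ^ j) (pow_pos hp.pos j).ne').mp hdvd2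
    exact (Nat.Coprime.pow_left _ (hp.coprime_iff_not_dvd.mpr hpm)).dvd_of_dvd_mul_right hdvd3

lemma wittAnnSet_add_mem {R : Type*} [CommRing R] {p n : ℕ} (hp : p.Prime) {x y : R}
    (hx : x ∈ wittAnnSet R p n) (hy : y ∈ wittAnnSet R p n) :
    x + y ∈ wittAnnSet R p n := by
  intro i hi
  rw [add_pow, Finset.mul_sum]
  apply Finset.sum_eq_zero
  intro k hk
  rw [Finset.mem_range] at hk
  have hk' : k ≤ p ^ i := Nat.lt_succ_iff.mp hk
  rcases Nat.eq_zero_or_pos k with rfl | hkpos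
  · simp only [pow_zero, one_mul, Nat.sub_zero, Nat.choose_zero_right, Nat.cast_one, mul_one]
    exact hy i hi
  · set j := k.factorization p with hj
    have hpj : p ^ j ∣ k := Nat.ordProj_dvd k p
    have hji : j ≤ i := by
      have h1 : p ^ j ≤ p ^ i := le_trans (Nat.le_of_dvd hkpos hpj) hk'
      exact (Nat.pow_le_pow_iff_right hp.one_lt).mp h1
    obtain ⟨c, hc⟩ := wittAux_pow_dvd_choose hp hkpos hk'
    set m := k / p ^ j with hm
    have hkm : p ^ j * m = k := Nat.ordProj_mul_ordCompl_eq_self k p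
    have hmpos : 0 < m := Nat.div_pos (Nat.le_of_dvd hkpos hpj) (pow_pos hp.pos j)
    have hxk : x ^ k = x ^ p ^ j * (x ^ p ^ j) ^ (m - 1) := by
      rw [← hkm, pow_mul, ← pow_succ']
      congr 1
      omega
    have key : (p : R) ^ (n - j) * x ^ p ^ j = 0 := hx j (hji.trans hi)
    calc (p : R) ^ (n - i) * (x ^ k * y ^ (p ^ i - k) * ((p ^ i).choose k : ℕ))
        = ((p : R) ^ (n - j) * x ^ p ^ j) *
            ((x ^ p ^ j) ^ (m - 1) * y ^ (p ^ i - k) * (c : R)) := by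
          rw [hc, hxk]
          push_cast
          rw [show (p : R) ^ (n - j) = (p : R) ^ (n - i) * (p : R) ^ (i - j) by
            rw [← pow_add]; congr 1; omega]
          ring
      _ = 0 := by rw [key, zero_mul]

/-- For a commutative ring `R` and a prime `p`, the set `𝔞_n(R)` is an ideal of `R`,
and these sets form an ascending chain `𝔞_n(R) ⊆ 𝔞_{n+1}(R)`. -/
theorem stmt8 (R : Type*) [CommRing R] (p : ℕ) (hp : p.Prime) (n : ℕ) :
    (∃ I : Ideal R, (I : Set R) = wittAnnSet R p n) ∧
      wittAnnSet R p n ⊆ wittAnnSet R p (n + 1) := by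
  constructor
  · refine ⟨{
      carrier := wittAnnSet R p n
      add_mem' := fun ha hb => wittAnnSet_add_mem hp ha hb
      zero_mem' := by
        intro i hi
        rw [zero_pow (pow_pos hp.pos i).ne', mul_zero]
      smul_mem' := by
        intro c x hx i hi
        have h := hx i hi
        calc (p : R) ^ (n - i) * (c • x) ^ p ^ i
            = c ^ p ^ i * ((p : R) ^ (n - i) * x ^ p ^ i) := by
              rw [smul_eq_mul, mul_pow]; ring
          _ = 0 := by rw [h, mul_zero] }, rfl⟩
  · intro x hx i hi
    rcases Nat.lt_or_ge i (n + 1) with h | h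
    · have hin : i ≤ n := Nat.lt_succ_iff.mp h
      have : (p : R) ^ (n + 1 - i) = (p : R) * (p : R) ^ (n - i) := by
        rw [← pow_succ']; congr 1; omega
      rw [this, mul_assoc, hx i hin, mul_zero]
    · have hi' : i = n + 1 := le_antisymm hi h
      subst hi'
      have h1 : x ^ p ^ n = 0 := by
        have := hx n le_rfl; simpa using this
      rw [Nat.sub_self, pow_zero, one_mul, pow_succ, pow_mul, h1,
        zero_pow hp.pos.ne', ]
end

section
/- Let R be a commutative ring, p a prime number, and n ≥ 1. If x ∈ 𝕎 R is a Witt vector all of whose coefficients lie in 𝔞_n(R), then all coefficients of frobenius(x) lie in 𝔞_{n−1}(R). Moreover p·W(𝔞_n(R)) ⊆ F(W(𝔞_n(R))): for every y ∈ 𝕎 R with all coefficients in 𝔞_n(R) there exists z ∈ 𝕎 R with all coefficients in 𝔞_n(R) such that frobenius(z) = p·y. -/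
open MvPolynomial

section WittAnnSet

variable {R : Type*} [CommRing R] {p n : ℕ}

theorem zero_mem_wittAnnSet (hp : p ≠ 0) : (0 : R) ∈ wittAnnSet R p n := fun i _ => by
  rw [zero_pow (pow_ne_zero i hp), mul_zero]

theorem mul_mem_wittAnnSet_left (r : R) {x : R} (hx : x ∈ wittAnnSet R p n) :
    r * x ∈ wittAnnSet R p n := fun i hi => by
  linear_combination r ^ p ^ i * hx i hi

theorem natCast_pow_mul_choose_mul_pow_eq_zero (hp : p.Prime) {x : R}
    (hx : x ∈ wittAnnSet R p n) {i j : ℕ} (hi : i ≤ n) (hj0 : j ≠ 0) (hj : j ≤ p ^ i) :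
    (p : R) ^ (n - i) * ((p ^ i).choose j * x ^ j) = 0 := by
  set t := j.factorization p
  have htj : p ^ t ≤ j := Nat.ordProj_le p hj0
  have hti : t ≤ i := (Nat.pow_le_pow_iff_right hp.one_lt).mp (htj.trans hj)
  obtain ⟨m, hm⟩ : p ^ (i - t) ∣ (p ^ i).choose j := by
    simpa [Nat.factorization_choose_prime_pow hp hj hj0] using
      Nat.ordProj_dvd ((p ^ i).choose j) p
  have hxt : (p : R) ^ (n - i) * (p : R) ^ (i - t) * x ^ p ^ t = 0 := by
    rw [← pow_add, show n - i + (i - t) = n - t by omega]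
    exact hx t (hti.trans hi)
  rw [hm, ← Nat.add_sub_cancel' htj, pow_add]
  push_cast
  linear_combination (m * x ^ (j - p ^ t)) * hxt

theorem add_mem_wittAnnSet (hp : p.Prime) {x y : R} (hx : x ∈ wittAnnSet R p n)
    (hy : y ∈ wittAnnSet R p n) : x + y ∈ wittAnnSet R p n := by
  intro i hi
  rw [add_pow, Finset.mul_sum, Finset.sum_range_succ', Finset.sum_eq_zero]
  · simpa using hy i hi
  · intro j hj
    have hj' : j + 1 ≤ p ^ i := Finset.mem_range.mp hj
    linear_combination y ^ (p ^ i - (j + 1)) *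
      natCast_pow_mul_choose_mul_pow_eq_zero hp hx hi (by omega) hj'

theorem wittAnnSet_subset_succ (hp : p ≠ 0) : wittAnnSet R p n ⊆ wittAnnSet R p (n + 1) := by
  intro x hx i hi
  rcases Nat.lt_or_eq_of_le hi with hi | rfl
  · rw [Nat.sub_add_comm (Nat.lt_succ_iff.mp hi), pow_succ, mul_right_comm,
      hx i (Nat.lt_succ_iff.mp hi), zero_mul]
  · have hxn : x ^ p ^ n = 0 := by simpa using hx n le_rfl
    rw [pow_succ, pow_mul, hxn, zero_pow hp, mul_zero]

theorem wittAnnSet_monotone (hp : p ≠ 0) : Monotone (wittAnnSet R p) :=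
  monotone_nat_of_le_succ fun _ => wittAnnSet_subset_succ hp

theorem pow_mem_wittAnnSet_of_mem_succ {x : R} (hx : x ∈ wittAnnSet R p (n + 1)) :
    x ^ p ∈ wittAnnSet R p n := fun i hi => by
  rw [← pow_mul, ← pow_succ', show n - i = n + 1 - (i + 1) by omega]
  exact hx (i + 1) (by omega)

theorem natCast_mul_mem_wittAnnSet_of_mem_succ (hp : p ≠ 0) {x : R}
    (hx : x ∈ wittAnnSet R p (n + 1)) : (p : R) * x ∈ wittAnnSet R p n := fun i hi => by
  have hpi : 1 ≤ p ^ i := Nat.one_le_pow i p (Nat.pos_of_ne_zero hp)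
  rw [mul_pow, ← mul_assoc, ← pow_add, show n - i + p ^ i = (p ^ i - 1) + (n + 1 - i) by omega,
    pow_add, mul_assoc, hx i (by omega), mul_zero]

end WittAnnSet

def wittAnnIdeal (p : ℕ) [Fact p.Prime] (R : Type*) [CommRing R] (n : ℕ) : Ideal R where
  carrier := wittAnnSet R p n
  zero_mem' := zero_mem_wittAnnSet (Fact.out : p.Prime).ne_zero
  add_mem' := add_mem_wittAnnSet Fact.out
  smul_mem' := mul_mem_wittAnnSet_left

theorem MvPolynomial.aeval_mem_of_constantCoeff_eq_zero {σ S R : Type*} [CommRing S]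
    [CommRing R] [Algebra S R] {I : Ideal R} {v : σ → R} (hv : ∀ i, v i ∈ I)
    {P : MvPolynomial σ S} (hP : constantCoeff P = 0) : aeval v P ∈ I := by
  have hv0 : (fun i => Ideal.Quotient.mkₐ S I (v i)) = 0 := by
    funext i
    simpa [Ideal.Quotient.mkₐ_eq_mk, Ideal.Quotient.eq_zero_iff_mem] using hv i
  rw [← Ideal.Quotient.eq_zero_iff_mem, ← Ideal.Quotient.mkₐ_eq_mk S, comp_aeval_apply, hv0,
    aeval_zero, hP, map_zero]

namespace WittVector

variable {p : ℕ} [hp : Fact p.Prime] {R : Type*} [CommRing R]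

theorem constantCoeff_frobeniusPoly (k : ℕ) :
    MvPolynomial.constantCoeff (frobeniusPoly p k) = 0 := by
  have hc : (0 : WittVector p ℤ).coeff = 0 := funext fun i => zero_coeff p ℤ i
  have h := coeff_frobenius (0 : WittVector p ℤ) k
  rw [map_zero, zero_coeff, hc, aeval_zero] at h
  simpa using h.symm

theorem constantCoeff_frobeniusPolyAux (k : ℕ) :
    MvPolynomial.constantCoeff (frobeniusPolyAux p k) = 0 := by
  have h := constantCoeff_frobeniusPoly (p := p) k
  rw [frobeniusPoly, map_add, map_mul, map_pow, constantCoeff_X, constantCoeff_C,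
    zero_pow hp.out.ne_zero, zero_add] at h
  exact (mul_eq_zero.mp h).resolve_left (by exact_mod_cast hp.out.ne_zero)

theorem exists_coeff_frobenius_eq_pow_add_mul {I : Ideal R} {x : WittVector p R}
    (hx : ∀ k, x.coeff k ∈ I) (k : ℕ) :
    ∃ a ∈ I, (frobenius x).coeff k = x.coeff k ^ p + p * a := by
  refine ⟨_, aeval_mem_of_constantCoeff_eq_zero hx
    (constantCoeff_frobeniusPolyAux (p := p) k), ?_⟩
  rw [coeff_frobenius, frobeniusPoly, map_add, map_mul, map_pow, aeval_X, aeval_C, eq_intCast,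
    Int.cast_natCast]

theorem coeff_verschiebung_mem {I : Ideal R} {x : WittVector p R} (hx : ∀ k, x.coeff k ∈ I) :
    ∀ k, (verschiebung x).coeff k ∈ I
  | 0 => by rw [verschiebung_coeff_zero]; exact I.zero_mem
  | k + 1 => by rw [verschiebung_coeff_succ]; exact hx k

end WittVector

theorem stmt9_general (p : ℕ) [Fact p.Prime] (R : Type*) [CommRing R] (n : ℕ) :
    (∀ x : WittVector p R, (∀ k, x.coeff k ∈ wittAnnSet R p n) →
      ∀ k, (WittVector.frobenius x).coeff k ∈ wittAnnSet R p (n - 1)) ∧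
    (∀ y : WittVector p R, (∀ k, y.coeff k ∈ wittAnnSet R p n) →
      ∃ z : WittVector p R, (∀ k, z.coeff k ∈ wittAnnSet R p n) ∧
        WittVector.frobenius z = (p : WittVector p R) * y) := by
  have hp : p.Prime := Fact.out
  refine ⟨fun x hx k => ?_, fun y hy => ⟨WittVector.verschiebung y,
    WittVector.coeff_verschiebung_mem (I := wittAnnIdeal p R n) hy,
    by rw [WittVector.frobenius_verschiebung, mul_comm]⟩⟩
  have hx' : ∀ k, x.coeff k ∈ wittAnnIdeal p R (n - 1 + 1) := fun k =>
    wittAnnSet_monotone hp.ne_zero (by omega) (hx k)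
  obtain ⟨a, ha, hxk⟩ := WittVector.exists_coeff_frobenius_eq_pow_add_mul hx' k
  rw [hxk]
  exact add_mem_wittAnnSet hp (pow_mem_wittAnnSet_of_mem_succ (hx' k))
    (natCast_mul_mem_wittAnnSet_of_mem_succ hp.ne_zero ha)

/-- For `n ≥ 1`: the Frobenius of the ring of `p`-typical Witt vectors maps Witt vectors
with all coefficients in `𝔞_n(R)` to Witt vectors with all coefficients in `𝔞_{n−1}(R)`;
moreover `p·W(𝔞_n(R)) ⊆ F(W(𝔞_n(R)))`. -/
theorem stmt9 (p : ℕ) [Fact p.Prime] (R : Type*) [CommRing R] (n : ℕ) (hn : 1 ≤ n) :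
    (∀ x : WittVector p R, (∀ k, x.coeff k ∈ wittAnnSet R p n) →
      ∀ k, (WittVector.frobenius x).coeff k ∈ wittAnnSet R p (n - 1)) ∧
    (∀ y : WittVector p R, (∀ k, y.coeff k ∈ wittAnnSet R p n) →
      ∃ z : WittVector p R, (∀ k, z.coeff k ∈ wittAnnSet R p n) ∧
        WittVector.frobenius z = (p : WittVector p R) * y) :=
  stmt9_general p R n
end

section
/- Let p be a prime number and R a noetherian commutative ring such that every nilpotent element of R is annihilated by a power of p (equivalently, the localization R[1/p] is reduced). Then every Witt vector x ∈ 𝕎 R all of whose coefficients are nilpotent is annihilated by a power of p: there exists m with p^m·x = 0. -/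
/-!
Let `N` be the nilradical of `R`. Since `R` is noetherian, the chain of annihilators of `p ^ m`
stabilizes, so one power `p ^ M` kills all of `N`; moreover `N ^ c = 0` for some `c`.
Over a square-zero ideal polynomial evaluation is affine, and the Witt addition polynomials send
`(x, 0)` and `(0, y)` to `x` and `y`; so Witt vectors with coefficients in a square-zero ideal add
coordinatewise. Applied modulo `N ^ (t + 2)`, where `N ^ (t + 1)` becomes square-zero, this shows
that multiplication by `p ^ M` moves coefficients from `N ^ (t + 1)` into `N ^ (t + 2)`; hence
`p ^ (M * c)` kills `x`.
-/

open MvPolynomial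

section SquareZero

variable {σ R S : Type*} [CommSemiring R] [CommRing S] [Algebra R S] {I : Ideal S}
  {u v : σ → S}

theorem MvPolynomial.aeval_sub_aeval_zero_mem (hu : ∀ i, u i ∈ I) (f : MvPolynomial σ R) :
    aeval u f - aeval 0 f ∈ I := by
  rw [← Ideal.Quotient.mk_eq_mk_iff_sub_mem, ← Ideal.Quotient.mkₐ_eq_mk R,
    comp_aeval_apply, comp_aeval_apply]
  congr 1
  ext i
  simpa [Ideal.Quotient.eq_zero_iff_mem] using hu i

-- All monomials of degree at least two vanish on a square-zero ideal.
theorem MvPolynomial.aeval_add_add_aeval_zero (hI : I * I = ⊥) (hu : ∀ i, u i ∈ I)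
    (hv : ∀ i, v i ∈ I) (f : MvPolynomial σ R) :
    aeval (u + v) f + aeval 0 f = aeval u f + aeval v f := by
  have hmul {a b : S} (ha : a ∈ I) (hb : b ∈ I) : a * b = 0 := by
    simpa [hI] using Ideal.mul_mem_mul ha hb
  induction f using MvPolynomial.induction_on with
  | C c => simp only [aeval_C]
  | add f g hf hg => simp only [map_add]; linear_combination hf + hg
  | mul_X f i hf =>
    simp only [map_mul, aeval_X, Pi.add_apply, Pi.zero_apply]
    linear_combination (u i + v i) * hf + hmul (aeval_sub_aeval_zero_mem hu f) (hv i)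
      + hmul (aeval_sub_aeval_zero_mem hv f) (hu i)

end SquareZero

theorem IsNoetherianRing.exists_pow_mul_eq_zero_of_pow_mul_eq_zero {R : Type*} [CommRing R]
    [IsNoetherianRing R] (r : R) :
    ∃ M : ℕ, ∀ a : R, (∃ m : ℕ, r ^ m * a = 0) → r ^ M * a = 0 := by
  obtain ⟨M, hM⟩ := (LinearMap.eventually_iSup_ker_pow_eq (LinearMap.mulLeft R r)).exists
  refine ⟨M, fun a ⟨m, hm⟩ => ?_⟩
  have : a ∈ LinearMap.ker (LinearMap.mulLeft R r ^ m) := by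
    simpa [LinearMap.pow_mulLeft] using hm
  have := hM ▸ Submodule.mem_iSup_of_mem m this
  simpa [LinearMap.pow_mulLeft] using this

namespace WittVector

variable {p : ℕ} [Fact p.Prime] {R : Type*} [CommRing R] {I J : Ideal R}

theorem coeff_add_of_mul_eq_bot (hI : I * I = ⊥) {x y : WittVector p R}
    (hx : ∀ n, x.coeff n ∈ I) (hy : ∀ n, y.coeff n ∈ I) (n : ℕ) :
    (x + y).coeff n = x.coeff n + y.coeff n := by
  set u := Function.uncurry ![x.coeff, (0 : WittVector p R).coeff]
  set v := Function.uncurry ![(0 : WittVector p R).coeff, y.coeff]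
  have huv : u + v = Function.uncurry ![x.coeff, y.coeff] := by
    ext ⟨i, k⟩; fin_cases i <;> simp [u, v]
  have hzero :
      Function.uncurry ![(0 : WittVector p R).coeff, (0 : WittVector p R).coeff] = 0 := by
    ext ⟨i, k⟩; fin_cases i <;> simp
  have key : (x + y).coeff n + (0 + 0 : WittVector p R).coeff n =
      (x + 0).coeff n + (0 + y).coeff n := by
    simp only [add_coeff, peval, ← huv, hzero]
    exact aeval_add_add_aeval_zero hI (by rintro ⟨i, k⟩; fin_cases i <;> simp [u, hx])
      (by rintro ⟨i, k⟩; fin_cases i <;> simp [v, hy]) _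
  simpa using key

theorem coeff_nsmul_of_mul_eq_bot (hI : I * I = ⊥) {x : WittVector p R}
    (hx : ∀ n, x.coeff n ∈ I) (k n : ℕ) : (k • x).coeff n = k • x.coeff n := by
  induction k generalizing n with
  | zero => simp
  | succ k ih =>
    have hkx (n : ℕ) : (k • x).coeff n ∈ I := ih n ▸ I.toAddSubmonoid.nsmul_mem (hx n) k
    rw [succ_nsmul, coeff_add_of_mul_eq_bot hI hkx hx, ih, succ_nsmul]

theorem natCast_mul_eq_zero_of_mul_eq_bot (hI : I * I = ⊥) {k : ℕ}
    (hk : ∀ a ∈ I, (k : R) * a = 0) {x : WittVector p R} (hx : ∀ n, x.coeff n ∈ I) :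
    (k : WittVector p R) * x = 0 := by
  ext n
  rw [← nsmul_eq_mul, coeff_nsmul_of_mul_eq_bot hI hx, nsmul_eq_mul, zero_coeff]
  exact hk _ (hx n)

-- Modulo `J` the ideal `I` becomes square-zero.
theorem coeff_natCast_mul_mem_of_mul_le (hIJ : I * I ≤ J) {k : ℕ}
    (hk : ∀ a ∈ I, (k : R) * a = 0) {x : WittVector p R} (hx : ∀ n, x.coeff n ∈ I)
    (n : ℕ) : ((k : WittVector p R) * x).coeff n ∈ J := by
  set π := Ideal.Quotient.mk J
  have hsq : I.map π * I.map π = ⊥ := by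
    rw [← Ideal.map_mul, Ideal.map_eq_bot_iff_le_ker, Ideal.mk_ker]
    exact hIJ
  have hkπ : ∀ a ∈ I.map π, (k : R ⧸ J) * a = 0 := by
    intro a ha
    obtain ⟨b, hb, rfl⟩ :=
      (Ideal.mem_map_iff_of_surjective π Ideal.Quotient.mk_surjective).mp ha
    rw [← map_natCast π, ← map_mul, hk b hb, map_zero]
  have hmap : map π ((k : WittVector p R) * x) = 0 := by
    rw [map_mul, map_natCast]
    exact natCast_mul_eq_zero_of_mul_eq_bot hsq hkπ fun n => Ideal.mem_map_of_mem π (hx n)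
  have := congrArg (coeff · n) hmap
  rwa [map_coeff, zero_coeff, Ideal.Quotient.eq_zero_iff_mem] at this

theorem natCast_pow_mul_eq_zero_of_pow_eq_bot {c : ℕ} (hI : I ^ c = ⊥) {k : ℕ}
    (hk : ∀ a ∈ I, (k : R) * a = 0) {x : WittVector p R} (hx : ∀ n, x.coeff n ∈ I) :
    (k : WittVector p R) ^ c * x = 0 := by
  have hmem (t n : ℕ) : ((k : WittVector p R) ^ t * x).coeff n ∈ I ^ (t + 1) := by
    induction t generalizing n with
    | zero => simpa using hx n
    | succ t ih =>
      rw [pow_succ' (k : WittVector p R), mul_assoc]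
      have hsq : I ^ (t + 1) * I ^ (t + 1) ≤ I ^ (t + 2) := by
        rw [← pow_add]
        exact Ideal.pow_le_pow_right (by omega)
      exact coeff_natCast_mul_mem_of_mul_le hsq
        (fun a ha => hk a (Ideal.pow_le_self t.succ_ne_zero ha)) ih n
  ext n
  simpa [hI] using Ideal.pow_le_pow_right c.le_succ (hmem c n)

end WittVector

/-- Over a noetherian commutative ring `R` in which every nilpotent element is annihilated
by a power of `p`, every `p`-typical Witt vector all of whose coefficients are nilpotent is
annihilated by a power of `p`. -/
theorem stmt11 (p : ℕ) [Fact p.Prime] (R : Type*) [CommRing R] [IsNoetherianRing R]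
    (h : ∀ x : R, IsNilpotent x → ∃ m : ℕ, (p : R) ^ m * x = 0)
    (x : WittVector p R) (hx : ∀ k, IsNilpotent (x.coeff k)) :
    ∃ m : ℕ, (p : WittVector p R) ^ m * x = 0 := by
  obtain ⟨M, hM⟩ := IsNoetherianRing.exists_pow_mul_eq_zero_of_pow_mul_eq_zero (p : R)
  obtain ⟨c, hc⟩ := IsNoetherianRing.isNilpotent_nilradical R
  refine ⟨M * c, ?_⟩
  rw [pow_mul, ← Nat.cast_pow]
  refine WittVector.natCast_pow_mul_eq_zero_of_pow_eq_bot hc (fun a ha => ?_)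
    fun n => mem_nilradical.mpr (hx n)
  exact_mod_cast hM a (h a (mem_nilradical.mp ha))
end

section
/- Let p be a prime number and R a commutative ring. Let I be the ideal of 𝕎 R generated by the set {p} ∪ range(verschiebung), i.e. I = p·𝕎(R) + V(𝕎(R)) as an ideal. Then: (1) I equals the kernel of the composite ring homomorphism 𝕎 R → R → R/pR, where the first map is the 0-th ghost component w₀ (x ↦ x.coeff 0) and the second is the quotient map; (2) I² = p·I, i.e. I·I equals the product of the principal ideal (p) of 𝕎 R with I. -/
/-!
Since `w₀` is surjective with kernel `V(𝕎 R)`, the preimage of `pR` under `w₀` is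
`(p) + V(𝕎 R)`. The projection formula `V x * y = V (x * F y)` together with `F (V y) = p y`
gives `V x * V y = p V(x y)`, so `V(𝕎 R)² ⊆ p V(𝕎 R)`, and `I² = p I` follows formally.
-/

theorem Ideal.sup_mul_self_eq_mul_sup {A : Type*} [CommSemiring A] {P K : Ideal A}
    (h : K * K ≤ P * K) : (P ⊔ K) * (P ⊔ K) = P * (P ⊔ K) := by
  refine le_antisymm ?_ (Ideal.mul_mono_left le_sup_left)
  rw [Ideal.sup_mul, Ideal.mul_sup K]
  refine sup_le le_rfl (sup_le ?_ ?_)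
  · rw [mul_comm]; exact Ideal.mul_mono_right le_sup_right
  · exact h.trans (Ideal.mul_mono_right le_sup_right)

namespace WittVector

variable {p : ℕ} [Fact p.Prime] {R : Type*} [CommRing R]

local notation "𝕎" => WittVector p

theorem coe_ker_constantCoeff :
    (RingHom.ker (constantCoeff : 𝕎 R →+* R) : Set (𝕎 R)) = Set.range verschiebung := by
  ext x
  refine ⟨fun h => ⟨x.shift 1, ?_⟩, ?_⟩
  · exact (eq_iterate_verschiebung (n := 1) (by simpa using h)).symm
  · rintro ⟨y, rfl⟩
    exact verschiebung_coeff_zero y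

theorem verschiebung_mul_verschiebung (x y : 𝕎 R) :
    verschiebung x * verschiebung y = p * verschiebung (x * y) := by
  rw [← verschiebung_mul_frobenius, frobenius_verschiebung, ← mul_assoc, mul_comm _ (p : 𝕎 R),
    ← nsmul_eq_mul, map_nsmul, nsmul_eq_mul]

theorem ker_constantCoeff_mul_self_le :
    RingHom.ker (constantCoeff : 𝕎 R →+* R) * RingHom.ker constantCoeff ≤
      Ideal.span {(p : 𝕎 R)} * RingHom.ker constantCoeff := by
  refine Ideal.mul_le.2 fun a ha b hb => ?_
  rw [← SetLike.mem_coe, coe_ker_constantCoeff] at ha hb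
  obtain ⟨x, rfl⟩ := ha
  obtain ⟨y, rfl⟩ := hb
  rw [verschiebung_mul_verschiebung]
  exact Ideal.mul_mem_mul (Ideal.mem_span_singleton_self _) (verschiebung_coeff_zero (x * y))

theorem span_p_union_range_verschiebung :
    Ideal.span ({(p : 𝕎 R)} ∪ Set.range verschiebung) =
      Ideal.span {(p : 𝕎 R)} ⊔ RingHom.ker constantCoeff := by
  rw [Ideal.span_union, ← coe_ker_constantCoeff, Ideal.span_eq]

theorem ker_mk_span_p_comp_constantCoeff :
    RingHom.ker ((Ideal.Quotient.mk (Ideal.span {(p : R)})).comp (constantCoeff : 𝕎 R →+* R)) =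
      Ideal.span {(p : 𝕎 R)} ⊔ RingHom.ker constantCoeff := by
  rw [← RingHom.comap_ker, Ideal.mk_ker]
  have span_p_eq_map : Ideal.span {(p : R)} = (Ideal.span {(p : 𝕎 R)}).map (constantCoeff : 𝕎 R →+* R) := by
    rw [Ideal.map_span, Set.image_singleton, map_natCast]
  rw [span_p_eq_map, Ideal.comap_map_of_surjective _ (constantCoeff_surjective p), ← RingHom.ker_eq_comap_bot]

end WittVector

/-- Let `I = p·𝕎(R) + V(𝕎(R))` be the ideal of the ring of `p`-typical Witt vectors
generated by `p` and the image of Verschiebung. Then `I` is the kernel of the composite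
`𝕎 R → R → R/pR` of the 0-th ghost component with the quotient map, and `I² = p·I`. -/
theorem stmt12 (p : ℕ) [Fact p.Prime] (R : Type*) [CommRing R]
    (I : Ideal (WittVector p R))
    (hI : I = Ideal.span ({(p : WittVector p R)} ∪
      Set.range (WittVector.verschiebung : WittVector p R → WittVector p R))) :
    I = RingHom.ker ((Ideal.Quotient.mk (Ideal.span {(p : R)})).comp
        (WittVector.constantCoeff : WittVector p R →+* R)) ∧
    I * I = Ideal.span {(p : WittVector p R)} * I := by
  rw [WittVector.span_p_union_range_verschiebung] at hI
  subst hI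
  exact ⟨WittVector.ker_mk_span_p_comp_constantCoeff.symm,
    Ideal.sup_mul_self_eq_mul_sup WittVector.ker_constantCoeff_mul_self_le⟩
end

section
/- Let p be a prime number, A a commutative ring, and B a commutative A-algebra with structure map ι : A → B, such that B is p-adically formally smooth over A (for every n ≥ 1, B/pⁿB is formally smooth over A/pⁿA) and p-adically separated and complete (IsAdicComplete with respect to the ideal (p) of B). Let σ : A → A be a Frobenius lift, i.e. a ring endomorphism with σ(a) ≡ a^p (mod pA) for all a ∈ A. Then there exists a ring endomorphism τ : B → B such that τ(ι(a)) = ι(σ(a)) for all a ∈ A and τ(b) ≡ b^p (mod pB) for all b ∈ B, i.e. τ is a Frobenius lift on B extending σ. -/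
/-!
Since `σ` lifts Frobenius, `b ↦ bᵖ mod p` is a ring map `B → B ⧸ p` restricting to `ι ∘ σ`
modulo `p`. The surjections `B ⧸ pⁿ⁺¹ → B ⧸ pⁿ` (`n ≥ 1`) have nilpotent kernels, so formal
smoothness of `B ⧸ pⁿ⁺¹` over `A ⧸ pⁿ⁺¹` lifts, step by step, any map `B → B ⧸ pⁿ` that agrees
with `ι ∘ σ` on `A` to such a map `B → B ⧸ pⁿ⁺¹`. By `p`-adic completeness the resulting
compatible tower is a single endomorphism `τ` of `B`, which is the required Frobenius lift.
-/

universe u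

open Ideal

theorem Algebra.FormallySmooth.exists_ringHom_lift {R T C D : Type*} [CommRing R] [CommRing T]
    [CommRing C] [CommRing D] [Algebra R T] [Algebra.FormallySmooth R T]
    (ψ : R →+* C) (q : C →+* D) (hq : Function.Surjective q)
    (hq' : IsNilpotent (RingHom.ker q))
    (F : T →+* D) (hF : F.comp (algebraMap R T) = q.comp ψ) :
    ∃ G : T →+* C, G.comp (algebraMap R T) = ψ ∧ q.comp G = F := by
  let _ : Algebra R C := ψ.toAlgebra
  let _ : Algebra R D := (q.comp ψ).toAlgebra
  let Fₐ : T →ₐ[R] D := { F with commutes' := RingHom.congr_fun hF }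
  let qₐ : C →ₐ[R] D := { q with commutes' := fun _ => rfl }
  exact ⟨liftOfSurjective Fₐ qₐ hq hq', RingHom.ext (AlgHom.commutes _),
    RingHom.ext (liftOfSurjective_apply Fₐ qₐ hq hq')⟩

theorem Ideal.Quotient.isNilpotent_ker_factorPow {R : Type*} [CommRing R] (I : Ideal R)
    {m n : ℕ} (h : n ≤ m) (hn : n ≠ 0) : IsNilpotent (RingHom.ker (factorPow I h)) := by
  refine ⟨m, ?_⟩
  rw [factor_ker, ← Ideal.map_pow, ← pow_mul, Submodule.zero_eq_bot]
  exact eq_bot_mono (map_mono (pow_le_pow_right (Nat.le_mul_of_pos_left m (by omega))))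
    (map_quotient_self _)

section NatCast

variable {R S : Type*} [CommRing R] [CommRing S] (p n : ℕ)

theorem Ideal.span_natCast_pow_le_comap (f : R →+* S) :
    span {(p : R)} ^ n ≤ (span {(p : S)} ^ n).comap f := by
  rw [← map_le_iff_le_comap, Ideal.map_pow, map_span, Set.image_singleton, map_natCast]

theorem Ideal.span_natCast_pow_eq_bot_quotient :
    span {(p : S ⧸ span {(p : S)} ^ n)} ^ n = ⊥ := by
  have : span {(p : S ⧸ span {(p : S)} ^ n)} = (span {(p : S)}).map (Ideal.Quotient.mk _) := by
    rw [map_span, Set.image_singleton, map_natCast]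
  rw [this, ← Ideal.map_pow, map_quotient_self]

theorem Ideal.span_natCast_pow_le_ker (t : R →+* S ⧸ span {(p : S)} ^ n) :
    span {(p : R)} ^ n ≤ RingHom.ker t := by
  simpa [span_natCast_pow_eq_bot_quotient, RingHom.ker] using span_natCast_pow_le_comap p n t

end NatCast

section Lifting

variable {p : ℕ} {A B S : Type*} [CommRing A] [CommRing B] [CommRing S] [Algebra A B]

theorem exists_lift_quotient_pow_succ (n : ℕ) (hn : n ≠ 0)
    [Algebra (A ⧸ span {(p : A)} ^ (n + 1)) (B ⧸ span {(p : B)} ^ (n + 1))]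
    [Algebra.FormallySmooth (A ⧸ span {(p : A)} ^ (n + 1)) (B ⧸ span {(p : B)} ^ (n + 1))]
    (halg : ∀ a : A, algebraMap (A ⧸ span {(p : A)} ^ (n + 1)) (B ⧸ span {(p : B)} ^ (n + 1))
      (Ideal.Quotient.mk _ a) = Ideal.Quotient.mk _ (algebraMap A B a))
    (φ : A →+* S) (t : B →+* S ⧸ span {(p : S)} ^ n)
    (ht : t.comp (algebraMap A B) = (Ideal.Quotient.mk _).comp φ) :
    ∃ t' : B →+* S ⧸ span {(p : S)} ^ (n + 1),
      t'.comp (algebraMap A B) = (Ideal.Quotient.mk _).comp φ ∧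
      (Ideal.Quotient.factorPow _ n.le_succ).comp t' = t := by
  -- `t` factors through `B ⧸ p ^ (n + 1)`, which is formally smooth over `A ⧸ p ^ (n + 1)`,
  -- and `φ` makes `S ⧸ p ^ (n + 1)` an algebra over `A ⧸ p ^ (n + 1)` as well.
  let ψ := quotientMap (span {(p : S)} ^ (n + 1)) φ (span_natCast_pow_le_comap p (n + 1) φ)
  let t₀ : B ⧸ span {(p : B)} ^ (n + 1) →+* S ⧸ span {(p : S)} ^ n :=
    Ideal.Quotient.lift _ t fun _ hb =>
      span_natCast_pow_le_ker p n t (pow_le_pow_right n.le_succ hb)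
  obtain ⟨G, hGψ, hGt⟩ := Algebra.FormallySmooth.exists_ringHom_lift ψ
    (Ideal.Quotient.factorPow _ n.le_succ) (Ideal.Quotient.factor_surjective _)
    (Ideal.Quotient.isNilpotent_ker_factorPow _ _ hn) t₀
    (Ideal.Quotient.ringHom_ext (RingHom.ext fun a => by
      simp only [RingHom.comp_apply, halg, t₀, ψ, quotientMap_mk, Ideal.Quotient.factor_mk]
      exact RingHom.congr_fun ht a))
  refine ⟨G.comp (Ideal.Quotient.mk _), RingHom.ext fun a => ?_, RingHom.ext fun b => ?_⟩
  · simpa only [RingHom.comp_apply, halg, ψ, quotientMap_mk]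
      using RingHom.congr_fun hGψ (Ideal.Quotient.mk _ a)
  · exact RingHom.congr_fun hGt (Ideal.Quotient.mk _ b)

theorem exists_ringHom_lift_of_isAdicComplete [IsAdicComplete (span {(p : S)}) S]
    (g : ∀ n : ℕ, A ⧸ (span {(p : A)} ^ n) →+* B ⧸ (span {(p : B)} ^ n))
    (hg : ∀ (n : ℕ) (a : A),
      g n (Ideal.Quotient.mk _ a) = Ideal.Quotient.mk _ (algebraMap A B a))
    (hsmooth : ∀ n : ℕ, 1 ≤ n →
      @Algebra.FormallySmooth (A ⧸ (span {(p : A)} ^ n))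
        (B ⧸ (span {(p : B)} ^ n)) _ _ ((g n).toAlgebra))
    (φ : A →+* S) (t : B →+* S ⧸ span {(p : S)})
    (ht : t.comp (algebraMap A B) = (Ideal.Quotient.mk _).comp φ) :
    ∃ τ : B →+* S, τ.comp (algebraMap A B) = φ ∧ (Ideal.Quotient.mk _).comp τ = t := by
  let Lift (n : ℕ) := {t : B →+* S ⧸ span {(p : S)} ^ (n + 1) //
    t.comp (algebraMap A B) = (Ideal.Quotient.mk _).comp φ}
  have step (n : ℕ) (t : Lift n) :
      ∃ t' : Lift (n + 1), (Ideal.Quotient.factorPow _ (n + 1).le_succ).comp t'.1 = t.1 := by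
    let _ := (g (n + 2)).toAlgebra
    have := hsmooth (n + 2) (by omega)
    obtain ⟨t', ht', hcompat⟩ :=
      exists_lift_quotient_pow_succ (n + 1) n.succ_ne_zero (hg (n + 2)) φ t.1 t.2
    exact ⟨⟨t', ht'⟩, hcompat⟩
  choose lift hlift using step
  let e := quotEquivOfEq (pow_one (span {(p : S)})).symm
  -- `f (n + 1)` is `lift n (f n)` by definition, so `hlift` is the compatibility of the tower.
  let f (n : ℕ) : Lift n := Nat.rec ⟨(e : _ →+* _).comp t, by
    ext a
    simpa [e] using congrArg e (RingHom.congr_fun ht a)⟩ lift n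
  have hmono : StrictMono (· + 1) := fun _ _ h => Nat.succ_lt_succ h
  let τ := IsAdicComplete.StrictMono.liftRingHom _ hmono (fun n => (f n).1) (hlift _ _)
  have hτ (n : ℕ) (b : B) : Ideal.Quotient.mk (span {(p : S)} ^ (n + 1)) (τ b) = (f n).1 b :=
    IsAdicComplete.StrictMono.mk_liftRingHom _ hmono _ (hlift _ _) b
  refine ⟨τ, ?_, RingHom.ext fun b => e.injective ?_⟩
  · refine DFunLike.coe_injective <|
      IsHausdorff.StrictMono.funext' (span {(p : S)}) hmono fun n a => ?_
    exact (hτ n _).trans (RingHom.congr_fun (f n).2 a)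
  · rw [RingHom.comp_apply, quotEquivOfEq_mk]
    exact hτ 0 b

end Lifting

noncomputable def frobeniusModP {p : ℕ} (hp : p.Prime) (B : Type*) [CommRing B] :
    B →+* B ⧸ span {(p : B)} where
  toFun b := Ideal.Quotient.mk _ (b ^ p)
  map_one' := by simp
  map_mul' x y := by simp [mul_pow]
  map_zero' := by simp [hp.ne_zero]
  map_add' x y := by
    obtain ⟨r, hr⟩ := exists_add_pow_prime_eq hp x y
    have : Ideal.Quotient.mk (span {(p : B)}) (p * x * y * r) = 0 :=
      Ideal.Quotient.eq_zero_iff_mem.2 (mem_span_singleton.2 ⟨x * y * r, by ring⟩)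
    simp only [hr, map_add, this, add_zero]

theorem frobeniusModP_comp_algebraMap {p : ℕ} (hp : p.Prime) {A B : Type*} [CommRing A]
    [CommRing B] [Algebra A B] {σ : A →+* A} (hσ : ∀ a : A, σ a - a ^ p ∈ span {(p : A)}) :
    (frobeniusModP hp B).comp (algebraMap A B) =
      (Ideal.Quotient.mk _).comp ((algebraMap A B).comp σ) := by
  refine RingHom.ext fun a => (Ideal.Quotient.eq.2 ?_).symm
  rw [RingHom.comp_apply, ← map_pow, ← map_sub, ← pow_one (span {(p : B)})]
  exact span_natCast_pow_le_comap p 1 (algebraMap A B) (by simpa using hσ a)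

/-- Let `B` be an `A`-algebra which is `p`-adically formally smooth over `A`
(i.e. `B/pⁿB` is formally smooth over `A/pⁿA` for all `n ≥ 1`, via the canonical maps
`g n : A/pⁿA → B/pⁿB`) and `p`-adically separated and complete. Then every Frobenius lift
`σ` on `A` extends to a Frobenius lift `τ` on `B`. -/
theorem stmt15 (p : ℕ) (hp : p.Prime) (A B : Type u) [CommRing A] [CommRing B] [Algebra A B]
    [IsAdicComplete (Ideal.span {(p : B)}) B]
    (g : ∀ n : ℕ, A ⧸ (Ideal.span {(p : A)} ^ n) →+* B ⧸ (Ideal.span {(p : B)} ^ n))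
    (hg : ∀ (n : ℕ) (a : A),
      g n (Ideal.Quotient.mk (Ideal.span {(p : A)} ^ n) a) =
        Ideal.Quotient.mk (Ideal.span {(p : B)} ^ n) (algebraMap A B a))
    (hsmooth : ∀ n : ℕ, 1 ≤ n →
      @Algebra.FormallySmooth (A ⧸ (Ideal.span {(p : A)} ^ n))
        (B ⧸ (Ideal.span {(p : B)} ^ n)) _ _ ((g n).toAlgebra))
    (σ : A →+* A) (hσ : ∀ a : A, σ a - a ^ p ∈ Ideal.span {(p : A)}) :
    ∃ τ : B →+* B,
      (∀ a : A, τ (algebraMap A B a) = algebraMap A B (σ a)) ∧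
      ∀ b : B, τ b - b ^ p ∈ Ideal.span {(p : B)} := by
  obtain ⟨τ, hτσ, hτp⟩ := exists_ringHom_lift_of_isAdicComplete g hg hsmooth
    ((algebraMap A B).comp σ) (frobeniusModP hp B) (frobeniusModP_comp_algebraMap hp hσ)
  exact ⟨τ, RingHom.congr_fun hτσ, fun b => Ideal.Quotient.eq.1 (RingHom.congr_fun hτp b)⟩
end

section
/- Let p be a prime number and R a commutative ring in which p is invertible. Then the 0-th ghost component w₀ : 𝕎 R → R, x ↦ x.coeff 0, restricts to a bijection (in fact a ring isomorphism) from the fixed subring {x ∈ 𝕎 R : frobenius x = x} of the Frobenius onto R. -/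
/-- If `p` is invertible in `R`, then the 0-th ghost component `x ↦ x.coeff 0` restricts to
a bijection from the fixed points of the Frobenius on `𝕎 R` onto `R`. -/
theorem stmt16 (p : ℕ) [Fact p.Prime] (R : Type*) [CommRing R] (h : IsUnit (p : R)) :
    Function.Bijective
      (fun x : {x : WittVector p R // WittVector.frobenius x = x} =>
        (x : WittVector p R).coeff 0) := by
  haveI : Invertible (p : R) := h.invertible
  have hg0 : ∀ x : WittVector p R, WittVector.ghostComponent 0 x = x.coeff 0 := by
    intro x
    simp [WittVector.ghostComponent_apply, wittPolynomial_zero]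
  have hconst : ∀ x : {x : WittVector p R // WittVector.frobenius x = x},
      ∀ n, WittVector.ghostComponent n (x : WittVector p R) = (x : WittVector p R).coeff 0 := by
    rintro ⟨x, hx⟩ n
    induction n with
    | zero => exact hg0 x
    | succ n ih =>
      have := WittVector.ghostComponent_frobenius (p := p) n x
      rw [hx] at this
      simpa [this] using ih
  constructor
  · rintro ⟨x, hx⟩ ⟨y, hy⟩ hxy
    simp only at hxy
    ext1
    apply (WittVector.ghostMap.bijective_of_invertible p R).1
    funext n
    simp only [WittVector.ghostMap_apply]
    rw [hconst ⟨x, hx⟩ n, hconst ⟨y, hy⟩ n, hxy]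
  · intro a
    set x := (WittVector.ghostEquiv p R).symm (fun _ => a) with hxdef
    have hgx : ∀ n, WittVector.ghostComponent n x = a := by
      intro n
      have : WittVector.ghostMap x = fun _ => a := by
        rw [hxdef, ← WittVector.ghostEquiv_coe]
        exact (WittVector.ghostEquiv p R).apply_symm_apply _
      exact congrFun this n
    have hfix : WittVector.frobenius x = x := by
      apply (WittVector.ghostMap.bijective_of_invertible p R).1
      funext n
      simp only [WittVector.ghostMap_apply]
      rw [WittVector.ghostComponent_frobenius, hgx, hgx]
    refine ⟨⟨x, hfix⟩, ?_⟩
    simpa using (hg0 x).symm.trans (hgx 0)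
end

section
/- Let A be a commutative ring and p a prime number. Set à := (1+pA)⁻¹A (localization at the submonoid 1+pA), A' := A[1/p], and Ã' := Ã[1/p], with the canonical commutative square of localization maps A → Ã, A → A', Ã → Ã', A' → Ã'. Then this square is a pullback of rings: the induced ring homomorphism from A to the fiber product à ×_{Ã'} A' = {(x, y) ∈ à × A' : x and y have the same image in Ã'} is bijective. -/
/-- The multiplicative submonoid `1 + pA = {1 + p·a : a ∈ A}` of a commutative ring `A`. -/
def oneAddMul (A : Type*) [CommRing A] (p : ℕ) : Submonoid A where
  carrier := {x | ∃ a : A, x = 1 + (p : A) * a}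
  one_mem' := ⟨0, by ring⟩
  mul_mem' := by
    rintro x y ⟨a, rfl⟩ ⟨b, rfl⟩
    exact ⟨a + b + (p : A) * (a * b), by ring⟩

/-!
Every `s ∈ 1 + pA` is coprime to `p`, hence to every power of `p`. Coprimality of `s` and
`p^n` is all the argument needs: an element killed by both `s` and `p^n` is zero (injectivity),
and a pair `(a/s, c/p^n)` agreeing in `Ã'` satisfies `t p^m (p^n a - s c) = 0` for some
`t ∈ 1 + pA`, so a Bézout relation `u s t + v p^(n+m) = 1` produces the common preimage
`u t a + v p^m c` (a Chinese remainder argument).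
-/

theorem isCoprime_of_mem_oneAddMul {A : Type*} [CommRing A] {p : ℕ} {s : A}
    (hs : s ∈ oneAddMul A p) : IsCoprime s (p : A) := by
  obtain ⟨a, rfl⟩ := hs
  exact ⟨1, -a, by ring⟩

theorem IsCoprime.exists_mul_sub_eq_zero {A : Type*} [CommRing A] {s e q f a c : A}
    (h : IsCoprime (s * e) (q * f)) (hac : e * f * (q * a) = e * f * (s * c)) :
    ∃ z : A, e * (z * s - a) = 0 ∧ f * (z * q - c) = 0 := by
  obtain ⟨u, v, huv⟩ := h
  refine ⟨u * e * a + v * f * c, ?_, ?_⟩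
  · linear_combination (-v) * hac + e * a * huv
  · linear_combination u * hac + f * c * huv

namespace IsLocalization

variable {A B B' C : Type*} [CommRing A] [CommRing B] [CommRing B'] [CommRing C]
  [Algebra A B] [Algebra A B'] [Algebra B C] {S : Submonoid A} {p : A}
  [IsLocalization S B] [IsLocalization.Away p B']

theorem injective_prod_algebraMap_of_isCoprime (hS : ∀ s ∈ S, IsCoprime s p) :
    Function.Injective (fun a : A => (algebraMap A B a, algebraMap A B' a)) := by
  intro a₁ a₂ h
  obtain ⟨h₁, h₂⟩ := Prod.ext_iff.mp h
  obtain ⟨s, hs⟩ := (eq_iff_exists S B).mp h₁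
  obtain ⟨⟨_, n, rfl⟩, hn⟩ := (eq_iff_exists (Submonoid.powers p) B').mp h₂
  obtain ⟨u, v, huv⟩ := (hS s s.2).pow_right (n := n)
  linear_combination u * hs + v * hn - (a₁ - a₂) * huv

omit [Algebra A B'] [IsLocalization.Away p B'] in
theorem exists_mul_pow_mul_eq_mul_pow_mul [IsLocalization.Away (algebraMap A B p) C] {a b : A}
    (h : algebraMap B C (algebraMap A B a) = algebraMap B C (algebraMap A B b)) :
    ∃ t ∈ S, ∃ m : ℕ, t * p ^ m * a = t * p ^ m * b := by
  obtain ⟨⟨_, m, rfl⟩, hm⟩ := (eq_iff_exists (Submonoid.powers (algebraMap A B p)) C).mp h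
  simp only [← map_pow, ← map_mul] at hm
  obtain ⟨t, ht⟩ := (eq_iff_exists S B).mp hm
  exact ⟨t, t.2, m, by simpa only [mul_assoc] using ht⟩

theorem exists_algebraMap_eq_of_isCoprime [IsLocalization.Away (algebraMap A B p) C]
    (hS : ∀ s ∈ S, IsCoprime s p) (g : B' →+* C)
    (hg : ∀ a : A, g (algebraMap A B' a) = algebraMap B C (algebraMap A B a))
    {x : B} {y : B'} (h : algebraMap B C x = g y) :
    ∃ a : A, algebraMap A B a = x ∧ algebraMap A B' a = y := by
  obtain ⟨⟨a, s⟩, hx⟩ := surj S x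
  obtain ⟨⟨c, q⟩, hy⟩ := surj (Submonoid.powers p) y
  obtain ⟨n, hn⟩ := q.2
  dsimp only at hx hy
  rw [← hn] at hy
  have hagree : algebraMap B C (algebraMap A B (p ^ n * a)) =
      algebraMap B C (algebraMap A B (s * c)) := by
    calc _ = algebraMap B C x * algebraMap B C (algebraMap A B s) *
          algebraMap B C (algebraMap A B (p ^ n)) := by
          rw [mul_comm (p ^ n), map_mul, ← hx]; simp only [map_mul]
      _ = g (y * algebraMap A B' (p ^ n)) * g (algebraMap A B' s) := by
          rw [h, ← hg, ← hg, map_mul]; ring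
      _ = _ := by rw [hy, ← map_mul, ← map_mul, mul_comm, hg]
  obtain ⟨t, ht, m, htm⟩ := exists_mul_pow_mul_eq_mul_pow_mul (S := S) (p := p) hagree
  have hcop : IsCoprime (s * t) (p ^ n * p ^ m) := by
    rw [← pow_add]; exact (hS _ (S.mul_mem s.2 ht)).pow_right
  obtain ⟨z, hzs, hzp⟩ := hcop.exists_mul_sub_eq_zero htm
  refine ⟨z, ?_, ?_⟩
  · rw [← (map_units B s).mul_left_inj, hx, ← map_mul, eq_iff_exists S B]
    exact ⟨⟨t, ht⟩, by linear_combination hzs⟩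
  · rw [← (map_units B' q).mul_left_inj, ← hn, hy, ← map_mul,
      eq_iff_exists (Submonoid.powers p) B']
    exact ⟨⟨p ^ m, m, rfl⟩, by linear_combination hzp⟩

end IsLocalization

theorem stmt18_general (A : Type*) [CommRing A] (p : ℕ)
    (g : Localization.Away (p : A) →+*
      Localization.Away (p : Localization (oneAddMul A p)))
    (hg : ∀ a : A,
      g (algebraMap A (Localization.Away (p : A)) a) =
        algebraMap (Localization (oneAddMul A p))
          (Localization.Away (p : Localization (oneAddMul A p)))
          (algebraMap A (Localization (oneAddMul A p)) a)) :
    Function.Injective (fun a : A =>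
      (algebraMap A (Localization (oneAddMul A p)) a,
        algebraMap A (Localization.Away (p : A)) a)) ∧
    ∀ (x : Localization (oneAddMul A p)) (y : Localization.Away (p : A)),
      algebraMap (Localization (oneAddMul A p))
          (Localization.Away (p : Localization (oneAddMul A p))) x = g y →
      ∃ a : A, algebraMap A (Localization (oneAddMul A p)) a = x ∧
        algebraMap A (Localization.Away (p : A)) a = y := by
  have hS : ∀ s ∈ oneAddMul A p, IsCoprime s (p : A) := fun _ => isCoprime_of_mem_oneAddMul
  have : IsLocalization.Away (algebraMap A (Localization (oneAddMul A p)) (p : A))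
      (Localization.Away (p : Localization (oneAddMul A p))) := by
    rw [map_natCast]; infer_instance
  exact ⟨IsLocalization.injective_prod_algebraMap_of_isCoprime hS,
    fun _ _ => IsLocalization.exists_algebraMap_eq_of_isCoprime hS g hg⟩

/-- Let `Ã = (1+pA)⁻¹A`, `A' = A[1/p]`, `Ã' = Ã[1/p]`, and let `g : A' → Ã'` be the
canonical map (characterized by compatibility with the localization maps from `A`). Then
the square is a pullback: the map `A → Ã ×_{Ã'} A'` is bijective, i.e. `a ↦ (image in Ã,
image in A')` is injective, and every pair `(x, y)` with equal images in `Ã'` comes from a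
(then unique) element of `A`. -/
theorem stmt18 (A : Type*) [CommRing A] (p : ℕ) (hp : p.Prime)
    (g : Localization.Away (p : A) →+*
      Localization.Away (p : Localization (oneAddMul A p)))
    (hg : ∀ a : A,
      g (algebraMap A (Localization.Away (p : A)) a) =
        algebraMap (Localization (oneAddMul A p))
          (Localization.Away (p : Localization (oneAddMul A p)))
          (algebraMap A (Localization (oneAddMul A p)) a)) :
    Function.Injective (fun a : A =>
      (algebraMap A (Localization (oneAddMul A p)) a,
        algebraMap A (Localization.Away (p : A)) a)) ∧
    ∀ (x : Localization (oneAddMul A p)) (y : Localization.Away (p : A)),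
      algebraMap (Localization (oneAddMul A p))
          (Localization.Away (p : Localization (oneAddMul A p))) x = g y →
      ∃ a : A, algebraMap A (Localization (oneAddMul A p)) a = x ∧
        algebraMap A (Localization.Away (p : A)) a = y :=
  stmt18_general A p g hg
end
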